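/- arXiv:1808.10334 — 7 statements merged into one kernel-verified Lean document; each statement's English description precedes it below -/
import Mathlib

section
/- Let ε > 0 and let x, y : [0,T] → ℝ (T > 0, or T = ∞) be differentiable functions such that y'(t) = −ε for all t, and x'(t) = x(t)² − y(t) for every t with y(t) < x(t)² (no condition is imposed on x' at times where y(t) ≥ x(t)²). If y(0) < x(0)², then y(t) < x(t)² for all t ∈ [0,T]. In other words, for the piecewise-defined fold system the complement ℝ² \ C₀ of the two-dimensional critical manifold is forward invariant, regardless of the choice of the vector field h on C₀. -/
/-!
Along a solution, `g = x² - y` satisfies `g' = 2 x x' + ε`, and `x' = g` while `g > 0`. Since `x`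
is bounded on `[0, T]`, say by `M`, this gives `g' > 0` as soon as `0 < g < ε / (2M + 1)`, so `g`
can never descend to the level `min (g 0) (ε / (2M + 1)) / 2`, let alone to `0`.
-/

open Set

theorem pos_of_hasDerivWithinAt_pos_near_zero {g g' : ℝ → ℝ} {a b c : ℝ} (hc : 0 < c)
    (hcont : ContinuousOn g (Icc a b))
    (hderiv : ∀ t ∈ Ico a b, HasDerivWithinAt g (g' t) (Ici t) t)
    (hpos : ∀ t ∈ Ico a b, 0 < g t → g t < c → 0 < g' t) (ha : 0 < g a) :
    ∀ t ∈ Icc a b, 0 < g t := by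
  have hmin : 0 < min (g a) c := lt_min ha hc
  have hma : min (g a) c / 2 < g a := by linarith [min_le_left (g a) c]
  have hmc : min (g a) c / 2 < c := by linarith [min_le_right (g a) c]
  have hbarrier : ∀ t ∈ Icc a b, min (g a) c / 2 ≤ g t :=
    image_le_of_deriv_right_lt_deriv_boundary' continuousOn_const
      (fun t _ => hasDerivWithinAt_const t _ _) hma.le hcont hderiv
      (fun t ht hgt => hpos t ht (hgt ▸ half_pos hmin) (hgt ▸ hmc))
  exact fun t ht => (half_pos hmin).trans_le (hbarrier t ht)

theorem two_mul_mul_add_pos_of_lt_div {ε M u v : ℝ} (hu : |u| ≤ M) (hv : 0 < v)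
    (hvε : v < ε / (2 * M + 1)) : 0 < 2 * u * v + ε := by
  have hM : 0 < 2 * M + 1 := by linarith [abs_nonneg u]
  have hvM : v * (2 * M + 1) < ε := (lt_div_iff₀ hM).mp hvε
  nlinarith [neg_abs_le u]

theorem fold_complement_forward_invariant_general
    (ε T : ℝ) (hε : 0 < ε) (x y : ℝ → ℝ)
    (hxdiff : ∀ t ∈ Set.Icc (0 : ℝ) T, DifferentiableAt ℝ x t)
    (hy : ∀ t ∈ Set.Icc (0 : ℝ) T, HasDerivAt y (-ε) t)
    (hx : ∀ t ∈ Set.Icc (0 : ℝ) T, y t < (x t) ^ 2 →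
      HasDerivAt x ((x t) ^ 2 - y t) t)
    (h0 : y 0 < (x 0) ^ 2) :
    ∀ t ∈ Set.Icc (0 : ℝ) T, y t < (x t) ^ 2 := by
  intro t ht
  obtain ⟨M, hM⟩ := isCompact_Icc.exists_bound_of_continuousOn
    fun s hs => (hxdiff s hs).continuousAt.continuousWithinAt
  have hM0 : 0 ≤ M := (norm_nonneg _).trans (hM 0 (left_mem_Icc.mpr (ht.1.trans ht.2)))
  have hg : ∀ s ∈ Icc 0 T,
      HasDerivAt (fun r => x r ^ 2 - y r) (2 * x s * deriv x s + ε) s := fun s hs =>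
    (((hxdiff s hs).hasDerivAt.fun_pow 2).fun_sub (hy s hs)).congr_deriv (by norm_num)
  have hpos : ∀ s ∈ Icc 0 T, 0 < x s ^ 2 - y s → x s ^ 2 - y s < ε / (2 * M + 1) →
      0 < 2 * x s * deriv x s + ε := by
    intro s hs hgs hgc
    rw [(hx s hs (sub_pos.mp hgs)).deriv]
    exact two_mul_mul_add_pos_of_lt_div (hM s hs) hgs hgc
  exact sub_pos.mp (pos_of_hasDerivWithinAt_pos_near_zero (div_pos hε (by linarith))
    (fun s hs => (hg s hs).continuousAt.continuousWithinAt)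
    (fun s hs => (hg s (Ico_subset_Icc_self hs)).hasDerivWithinAt)
    (fun s hs => hpos s (Ico_subset_Icc_self hs)) (sub_pos.mpr h0) t ht)

/-- For the fold system with two-dimensional critical manifold
`C₀ = {(x,y) : y ≥ x²}`, the complement `ℝ² \ C₀` is forward invariant:
if `y' = -ε` everywhere and `x' = x² - y` whenever `y < x²` (no condition on `x'`
where `y ≥ x²`), and `y 0 < (x 0)²`, then `y t < (x t)²` for all `t ∈ [0,T]`. -/
theorem fold_complement_forward_invariant
    (ε T : ℝ) (hε : 0 < ε) (hT : 0 < T) (x y : ℝ → ℝ)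
    (hxdiff : ∀ t ∈ Set.Icc (0 : ℝ) T, DifferentiableAt ℝ x t)
    (hy : ∀ t ∈ Set.Icc (0 : ℝ) T, HasDerivAt y (-ε) t)
    (hx : ∀ t ∈ Set.Icc (0 : ℝ) T, y t < (x t) ^ 2 →
      HasDerivAt x ((x t) ^ 2 - y t) t)
    (h0 : y 0 < (x 0) ^ 2) :
    ∀ t ∈ Set.Icc (0 : ℝ) T, y t < (x t) ^ 2 :=
  fold_complement_forward_invariant_general ε T hε x y hxdiff hy hx h0
end

section
/- Let ε > 0 and let (x,y) : [0,∞) → ℝ² be a differentiable solution of x' = max(x² − y, 0), y' = −ε with y(0) ≥ x(0)². Set t* := (y(0) − x(0)²)/ε. Then for all t ∈ [0, t*] one has x(t) = x(0) and y(t) = y(0) − εt; in particular (x(t*), y(t*)) = (x(0), x(0)²). Moreover, for all t > t* one has y(t) < x(t)². That is, every trajectory starting in the two-dimensional critical manifold C₀ moves vertically downwards, exits C₀ at the point (x(0), x(0)²) on the parabola, and never re-enters C₀. -/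
/-!
While the trajectory lies in `C₀`, i.e. `x(0)² ≤ y(t)`, the constant `x(0)` also solves
`x' = max(x² - y, 0)`; this right-hand side is Lipschitz in `x` on bounded sets, so by uniqueness
`x ≡ x(0)` up to the exit time `t*`, while `y` decreases linearly. After `t*`, the function
`v = y - x²` satisfies `v' = -ε` at each of its zeros, because `x' = 0` there. Hence `v` can only
cross zero downwards, and from `v(t*) = 0` it stays negative forever.
-/

open Set Filter Topology SignType
open scoped NNReal

theorem eq_add_mul_sub_of_hasDerivAt_const {f : ℝ → ℝ} {a c : ℝ}
    (hf : ∀ t, a ≤ t → HasDerivAt f c t) {t : ℝ} (ht : a ≤ t) :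
    f t = f a + c * (t - a) := by
  have hline : ∀ s, HasDerivAt (fun u => f a + c * (u - a)) c s := fun s => by
    simpa using (((hasDerivAt_id s).sub_const a).const_mul c).const_add (f a)
  refine eq_of_has_deriv_right_eq (f' := fun _ => c)
    (fun s hs => (hf s hs.1).hasDerivWithinAt) (fun s _ => (hline s).hasDerivWithinAt)
    (fun s hs => (hf s hs.1).continuousAt.continuousWithinAt)
    (fun s _ => (hline s).continuousAt.continuousWithinAt) (by simp) t ⟨ht, le_rfl⟩

theorem lipschitzOnWith_max_sq_sub_const (c : ℝ) (R : ℝ≥0) :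
    LipschitzOnWith (2 * R) (fun u : ℝ => max (u ^ 2 - c) 0) (Metric.closedBall 0 R) := by
  refine LipschitzOnWith.of_dist_le_mul fun u hu w hw => ?_
  rw [mem_closedBall_zero_iff, Real.norm_eq_abs] at hu hw
  simp only [Real.dist_eq, NNReal.coe_mul, NNReal.coe_ofNat]
  calc |max (u ^ 2 - c) 0 - max (w ^ 2 - c) 0|
      ≤ |u ^ 2 - c - (w ^ 2 - c)| := abs_max_sub_max_le_abs _ _ _
    _ = |u + w| * |u - w| := by rw [← abs_mul]; ring_nf
    _ ≤ 2 * R * |u - w| := by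
        gcongr
        linarith [abs_add_le u w]

theorem eqOn_const_of_hasDerivAt_max_sq_sub {x y : ℝ → ℝ} {a b : ℝ}
    (hx : ∀ t ∈ Icc a b, HasDerivAt x (max (x t ^ 2 - y t) 0) t)
    (hy : ∀ t ∈ Icc a b, x a ^ 2 ≤ y t) :
    EqOn x (fun _ => x a) (Icc a b) := by
  intro t ht
  have hcont : ContinuousOn x (Icc a b) :=
    fun s hs => (hx s hs).continuousAt.continuousWithinAt
  obtain ⟨C, hC⟩ := isCompact_Icc.exists_bound_of_continuousOn hcont
  have hball : ∀ s ∈ Icc a b, x s ∈ Metric.closedBall 0 C.toNNReal := fun s hs =>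
    mem_closedBall_zero_iff.2 ((hC s hs).trans (Real.le_coe_toNNReal C))
  have ha : a ∈ Icc a b := ⟨le_rfl, ht.1.trans ht.2⟩
  refine ODE_solution_unique_of_mem_Icc_right
    (v := fun s u => max (u ^ 2 - y s) 0) (s := fun _ => Metric.closedBall 0 C.toNNReal)
    (fun s _ => lipschitzOnWith_max_sq_sub_const (y s) _) hcont
    (fun s hs => (hx s (Ico_subset_Icc_self hs)).hasDerivWithinAt)
    (fun s hs => hball s (Ico_subset_Icc_self hs)) continuousOn_const
    (fun s hs => ?_) (fun _ _ => hball a ha) rfl ht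
  rw [max_eq_right (sub_nonpos.2 (hy s (Ico_subset_Icc_self hs)))]
  exact hasDerivWithinAt_const _ _ _

theorem neg_of_deriv_neg_at_zeros {v : ℝ → ℝ} {T : ℝ}
    (hv : ∀ s, T ≤ s → ContinuousAt v s) (hT : v T = 0)
    (hcross : ∀ r, T ≤ r → v r = 0 → deriv v r < 0) {t : ℝ} (ht : T < t) :
    v t < 0 := by
  have hsign : ∀ r, T ≤ r → v r = 0 → ∀ᶠ s in 𝓝 r, sign (v s) = sign (r - s) :=
    fun r hr hr0 => eventually_nhdsWithin_sign_eq_of_deriv_neg (hcross r hr hr0) hr0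
  have hnonpos : Icc T t ⊆ {s | v s ≤ 0} := by
    refine IsClosed.Icc_subset_of_forall_mem_nhdsWithin ?_ hT.le ?_
    · have hcont : ContinuousOn v (Icc T t) :=
        continuousOn_of_forall_continuousAt fun s hs => hv s hs.1
      rw [inter_comm]
      exact hcont.preimage_isClosed_of_isClosed isClosed_Icc isClosed_Iic
    · rintro r ⟨hr : v r ≤ 0, hrT, -⟩
      rcases hr.lt_or_eq with hneg | hzero
      · exact nhdsWithin_le_nhds ((hv r hrT).preimage_mem_nhds (Iic_mem_nhds hneg))
      · filter_upwards [(hsign r hrT hzero).filter_mono nhdsWithin_le_nhds, self_mem_nhdsWithin]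
          with s hs (hrs : r < s)
        rw [sign_eq_neg_one_iff.2 (sub_neg.2 hrs), sign_eq_neg_one_iff] at hs
        exact hs.le
  refine (hnonpos ⟨ht.le, le_rfl⟩).lt_of_ne fun ht0 => ?_
  -- a downward crossing at `t` would force `v > 0` just before `t`
  obtain ⟨s, hs, hsT⟩ := (((hsign t ht.le ht0).filter_mono nhdsWithin_le_nhds).and
    (Ioo_mem_nhdsLT ht)).exists
  rw [sign_eq_one_iff.2 (sub_pos.2 hsT.2), sign_eq_one_iff] at hs
  exact (hnonpos ⟨hsT.1.le, hsT.2.le⟩).not_gt hs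

/-- For the `h = 0` fold system `x' = max(x² - y, 0)`, `y' = -ε`
with `y 0 ≥ (x 0)²`, setting `t* := (y 0 - (x 0)²)/ε`: on `[0, t*]` the trajectory
moves vertically downwards, `x t = x 0` and `y t = y 0 - ε t` (so it exits the
critical manifold `C₀` at `(x 0, (x 0)²)`), and for all `t > t*` one has
`y t < (x t)²`, i.e. the trajectory never re-enters `C₀`. -/
theorem fold_h_zero_vertical_exit
    (ε : ℝ) (hε : 0 < ε) (x y : ℝ → ℝ)
    (hx : ∀ t : ℝ, 0 ≤ t → HasDerivAt x (max ((x t) ^ 2 - y t) 0) t)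
    (hy : ∀ t : ℝ, 0 ≤ t → HasDerivAt y (-ε) t)
    (h0 : (x 0) ^ 2 ≤ y 0) :
    (∀ t ∈ Set.Icc (0 : ℝ) ((y 0 - (x 0) ^ 2) / ε),
        x t = x 0 ∧ y t = y 0 - ε * t) ∧
    (∀ t : ℝ, (y 0 - (x 0) ^ 2) / ε < t → y t < (x t) ^ 2) := by
  set T := (y 0 - x 0 ^ 2) / ε
  have hT0 : 0 ≤ T := div_nonneg (sub_nonneg.2 h0) hε.le
  have hεT : ε * T = y 0 - x 0 ^ 2 := mul_div_cancel₀ _ hε.ne'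
  have hy_lin : ∀ t, 0 ≤ t → y t = y 0 - ε * t := fun t ht => by
    rw [eq_add_mul_sub_of_hasDerivAt_const hy ht]; ring
  have hx_const : ∀ t ∈ Icc 0 T, x t = x 0 :=
    eqOn_const_of_hasDerivAt_max_sq_sub (fun t ht => hx t ht.1) fun t ht => by
      rw [hy_lin t ht.1]
      linarith [mul_le_mul_of_nonneg_left ht.2 hε.le]
  refine ⟨fun t ht => ⟨hx_const t ht, hy_lin t ht.1⟩, fun t ht => ?_⟩
  have hv_deriv : ∀ r, 0 ≤ r → y r - x r ^ 2 = 0 →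
      HasDerivAt (fun s => y s - x s ^ 2) (-ε) r := by
    intro r hr hr0
    have hx_stop : HasDerivAt x 0 r := by
      simpa [show x r ^ 2 - y r = 0 by linarith] using hx r hr
    exact ((hy r hr).sub (hx_stop.pow 2)).congr_deriv (by ring)
  have hv_exit : y T - x T ^ 2 = 0 := by
    rw [hy_lin T hT0, hx_const T ⟨hT0, le_rfl⟩]; linarith
  have hv_neg := neg_of_deriv_neg_at_zeros (v := fun s => y s - x s ^ 2)
    (fun s hs => (hy s (hT0.trans hs)).continuousAt.sub ((hx s (hT0.trans hs)).continuousAt.pow 2))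
    hv_exit (fun r hr hr0 => by rw [(hv_deriv r (hT0.trans hr) hr0).deriv]; linarith) ht
  linarith
end

section
/- Define H : ℝ² → ℝ by H(x,y) = (1/2) e^{−2y} (y − x² + 1/2). Then H is a first integral of the planar system x' = x² − y, y' = x: for every differentiable solution (x,y) : I → ℝ² of this system on an interval I, the function t ↦ H(x(t), y(t)) is constant on I. -/
/-- The constant of motion `H(x,y) = (1/2) e^{-2y} (y - x² + 1/2)` of the
chart-`K₂` canard system. -/
noncomputable def canardH (p : ℝ × ℝ) : ℝ :=
  (1 / 2) * Real.exp (-2 * p.2) * (p.2 - p.1 ^ 2 + 1 / 2)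

/-!
The partial derivatives of `H` are `∂ₓH = -x e^{-2y}` and `∂ᵧH = (x² - y) e^{-2y}`, so the
vector field `(x² - y, x)` equals `e^{2y} (∂ᵧH, -∂ₓH)`: up to the positive factor `e^{2y}` the
system is Hamiltonian with Hamiltonian `H`. Hence `H` has zero derivative along solutions, and
by the mean value inequality it is constant on the (convex) time interval.
-/

theorem Convex.eq_of_hasDerivWithinAt_zero {E : Type*} [NormedAddCommGroup E] [NormedSpace ℝ E]
    {s : Set ℝ} (hs : Convex ℝ s) {f : ℝ → E} (hf : ∀ t ∈ s, HasDerivWithinAt f 0 s t)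
    {a b : ℝ} (ha : a ∈ s) (hb : b ∈ s) : f a = f b := by
  have h := hs.norm_image_sub_le_of_norm_hasDerivWithin_le hf (C := 0) (by simp) hb ha
  rwa [zero_mul, norm_le_zero_iff, sub_eq_zero] at h

theorem HasDerivAt.canardH_comp {x y : ℝ → ℝ} {x' y' t : ℝ} (hx : HasDerivAt x x' t)
    (hy : HasDerivAt y y' t) :
    HasDerivAt (fun t => canardH (x t, y t))
      (Real.exp (-2 * y t) * ((x t ^ 2 - y t) * y' - x t * x')) t := by
  have hexp := (hy.const_mul (-2)).exp
  have hpoly := (hy.sub (hx.pow 2)).add_const (1 / 2)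
  refine ((hexp.const_mul (1 / 2)).mul hpoly).congr_deriv ?_
  simp only [Pi.sub_apply, Pi.pow_apply]
  push_cast
  ring

/-- `H` is a first integral of the planar system
`x' = x² - y`, `y' = x`: along every differentiable solution on an interval `I`,
the function `t ↦ H(x t, y t)` is constant. -/
theorem canardH_first_integral
    (I : Set ℝ) (hI : Convex ℝ I) (x y : ℝ → ℝ)
    (hx : ∀ t ∈ I, HasDerivAt x ((x t) ^ 2 - y t) t)
    (hy : ∀ t ∈ I, HasDerivAt y (x t) t) :
    ∀ s ∈ I, ∀ t ∈ I, canardH (x s, y s) = canardH (x t, y t) := by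
  intro s hs t ht
  refine hI.eq_of_hasDerivWithinAt_zero (f := fun u => canardH (x u, y u)) (fun u hu => ?_) hs ht
  have h := (hx u hu).canardH_comp (hy u hu)
  rw [show (x u ^ 2 - y u) * x u - x u * (x u ^ 2 - y u) = 0 by ring, mul_zero] at h
  exact h.hasDerivWithinAt
end

section
/- The curve γ_c(t) = (t/2, t²/4 − 1/2), t ∈ ℝ, is a (globally defined) solution of the planar system x' = max(x² − y, 0), y' = x; it satisfies x(t)² − y(t) = 1/2 > 0 for all t (so it lies strictly below the parabola {y = x²}, and also solves x' = x² − y, y' = x), and H(γ_c(t)) = 0 for all t ∈ ℝ, where H(x,y) = (1/2) e^{−2y}(y − x² + 1/2). Thus γ_c is the unique-up-to-time-shift maximal canard trajectory lying on the zero level set of H. -/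
theorem canardH_eq_zero_iff (p : ℝ × ℝ) : canardH p = 0 ↔ p.1 ^ 2 - p.2 = 1 / 2 := by
  have hexp : Real.exp (-2 * p.2) ≠ 0 := (Real.exp_pos _).ne'
  simp only [canardH, mul_eq_zero, hexp, one_div, inv_eq_zero, OfNat.ofNat_ne_zero, or_self,
    false_or]
  constructor <;> intro h <;> linarith

/-- The curve `γ_c(t) = (t/2, t²/4 - 1/2)` is a globally
defined solution of `x' = max(x² - y, 0)`, `y' = x`; it satisfies
`x(t)² - y(t) = 1/2 > 0` for all `t` (so it lies strictly below the parabola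
and also solves `x' = x² - y`), and `H(γ_c(t)) = 0` for all `t`. -/
theorem maximal_canard_solution :
    ∀ t : ℝ,
      HasDerivAt (fun s : ℝ => s / 2)
        (max ((t / 2) ^ 2 - (t ^ 2 / 4 - 1 / 2)) 0) t ∧
      HasDerivAt (fun s : ℝ => s ^ 2 / 4 - 1 / 2) (t / 2) t ∧
      (t / 2) ^ 2 - (t ^ 2 / 4 - 1 / 2) = 1 / 2 ∧
      canardH (t / 2, t ^ 2 / 4 - 1 / 2) = 0 := by
  intro t
  have hgap : (t / 2) ^ 2 - (t ^ 2 / 4 - 1 / 2) = 1 / 2 := by ring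
  refine ⟨?_, ?_, hgap, (canardH_eq_zero_iff _).2 hgap⟩
  · rw [hgap, max_eq_left (by norm_num)]
    simpa using (hasDerivAt_id t).div_const 2
  · exact (((hasDerivAt_pow 2 t).div_const 4).sub_const (1 / 2)).congr_deriv (by norm_num; ring)
end

section
/- Every maximal solution (x,y) of the smooth planar system x' = x² − y, y' = x whose initial value satisfies 0 < H(x(0), y(0)) < 1/4, where H(x,y) = (1/2) e^{−2y}(y − x² + 1/2), is a nonconstant periodic orbit: the solution is defined for all t ∈ ℝ and there exists P > 0 with (x(t+P), y(t+P)) = (x(t), y(t)) for all t ∈ ℝ. That is, all level sets {H = h} with h ∈ (0, 1/4) are closed orbits of this system. -/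
open Real Set

namespace CanardAux

/-- clamp to `[-M, M]` -/
noncomputable def cl (M a : ℝ) : ℝ := max (-M) (min M a)

lemma cl_eq {M a : ℝ} (h : |a| ≤ M) : cl M a = a := by
  rw [abs_le] at h
  simp [cl, min_eq_right h.2, max_eq_right h.1]

lemma abs_cl_le {M : ℝ} (hM : 0 ≤ M) (a : ℝ) : |cl M a| ≤ M := by
  rw [abs_le, cl]
  constructor
  · exact le_max_left _ _
  · exact max_le (by linarith) (min_le_left _ _)

lemma cl_neg {M : ℝ} (hM : 0 ≤ M) (a : ℝ) : cl M (-a) = - cl M a := by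
  simp only [cl, max_def, min_def]
  split_ifs <;> linarith

lemma cl_lip (M a b : ℝ) : |cl M a - cl M b| ≤ |a - b| := by
  have h1 : |min M a - min M b| ≤ |a - b| := abs_min_sub_min_le_max .. |>.trans (by simp [abs_sub_comm])
  calc |cl M a - cl M b| ≤ |min M a - min M b| := by
        exact abs_max_sub_max_le_max .. |>.trans (by simp [abs_sub_comm])
    _ ≤ |a - b| := h1

/-- clamped vector field -/
noncomputable def cf (M : ℝ) (p : ℝ × ℝ) : ℝ × ℝ :=
  ((cl M p.1) ^ 2 - cl M p.2, cl M p.1)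

/-- true vector field -/
def tf (p : ℝ × ℝ) : ℝ × ℝ := (p.1 ^ 2 - p.2, p.1)

lemma cf_eq_tf {M : ℝ} {p : ℝ × ℝ} (h1 : |p.1| ≤ M) (h2 : |p.2| ≤ M) : cf M p = tf p := by
  simp [cf, tf, cl_eq h1, cl_eq h2]

lemma cf_reflect {M : ℝ} (hM : 0 ≤ M) (p : ℝ × ℝ) :
    cf M (-p.1, p.2) = ((cf M p).1, -(cf M p).2) := by
  simp [cf, cl_neg hM]

lemma cf_lip {M : ℝ} (hM : 0 ≤ M) :
    LipschitzWith (Real.toNNReal (2 * M + 1)) (cf M) := by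
  apply LipschitzWith.of_dist_le_mul
  intro p q
  have hc : (Real.toNNReal (2 * M + 1) : ℝ) = 2 * M + 1 := Real.coe_toNNReal _ (by linarith)
  rw [hc]
  have h1 : dist p.1 q.1 ≤ dist p q := le_max_left _ _
  have h2 : dist p.2 q.2 ≤ dist p q := le_max_right _ _
  have hd : 0 ≤ dist p q := dist_nonneg
  simp only [Prod.dist_eq, Real.dist_eq] at h1 h2 hd ⊢
  have l1 : |cl M p.1 - cl M q.1| ≤ |p.1 - q.1| := cl_lip ..
  have l2 : |cl M p.2 - cl M q.2| ≤ |p.2 - q.2| := cl_lip ..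
  have a1 := abs_cl_le hM p.1
  have a2 := abs_cl_le hM q.1
  have b2 := abs_cl_le hM q.2
  apply max_le
  · -- |(a² - c) - (b² - d)| ≤ 2M|a-b| + |c-d|
    set a := cl M p.1; set b := cl M q.1; set c := cl M p.2; set d := cl M q.2
    have : |a ^ 2 - c - (b ^ 2 - d)| ≤ |a + b| * |a - b| + |c - d| := by
      have : a ^ 2 - c - (b ^ 2 - d) = (a + b) * (a - b) + -(c - d) := by ring
      rw [this]
      exact (abs_add_le _ _).trans (by rw [abs_mul, abs_neg])
    refine this.trans ?_
    have hab : |a + b| ≤ 2 * M := (abs_add_le _ _).trans (by linarith [a1, a2])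
    have key : |a + b| * |a - b| ≤ (2 * M) * (|p.1 - q.1| ⊔ |p.2 - q.2|) :=
      mul_le_mul hab (l1.trans h1) (abs_nonneg _) (by linarith)
    linarith [l2.trans h2]
  · calc |cl M p.1 - cl M q.1| ≤ |p.1 - q.1| := l1
      _ ≤ |p.1 - q.1| ⊔ |p.2 - q.2| := h1
      _ ≤ (2 * M + 1) * (|p.1 - q.1| ⊔ |p.2 - q.2|) := by nlinarith [mul_nonneg hM hd]

lemma cf_bound {M : ℝ} (hM : 0 ≤ M) (p : ℝ × ℝ) : ‖cf M p‖ ≤ M ^ 2 + M := by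
  rw [Prod.norm_def]
  have a1 := abs_cl_le hM p.1
  have a2 := abs_cl_le hM p.2
  simp only [cf]
  apply max_le
  · rw [Real.norm_eq_abs]
    calc |(cl M p.1) ^ 2 - cl M p.2| ≤ |cl M p.1| ^ 2 + |cl M p.2| := by
          refine (abs_sub _ _).trans ?_
          simp [abs_pow, sq_abs]
      _ ≤ M ^ 2 + M := by nlinarith [abs_nonneg (cl M p.1)]
  · rw [Real.norm_eq_abs]; show |cl M p.1| ≤ M ^ 2 + M; nlinarith

end CanardAux

section Part2
open Real Set CanardAux

namespace CanardAux

lemma level_eq {h : ℝ} {p : ℝ × ℝ} (hp : canardH p = h) :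
    p.1 ^ 2 = p.2 + 1/2 - 2 * h * Real.exp (2 * p.2) := by
  have he : Real.exp (-2 * p.2) * Real.exp (2 * p.2) = 1 := by
    rw [← Real.exp_add]; norm_num
  simp only [canardH] at hp
  have key : 2 * h * Real.exp (2 * p.2) = p.2 - p.1 ^ 2 + 1/2 := by
    calc 2 * h * Real.exp (2 * p.2)
        = 2 * ((1/2) * Real.exp (-2 * p.2) * (p.2 - p.1 ^ 2 + 1/2)) * Real.exp (2 * p.2) := by
          rw [hp]
      _ = (Real.exp (-2 * p.2) * Real.exp (2 * p.2)) * (p.2 - p.1 ^ 2 + 1/2) := by ring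
      _ = p.2 - p.1 ^ 2 + 1/2 := by rw [he]; ring
  linarith

lemma level_bound {h : ℝ} (h0 : 0 < h) (h4 : h < 1/4) {p : ℝ × ℝ}
    (hp : canardH p = h) : |p.1| ≤ 1/h + 2 ∧ |p.2| ≤ 1/h + 2 := by
  have key := level_eq hp
  have hx2 : 0 ≤ p.1 ^ 2 := sq_nonneg p.1
  have hepos : 0 < Real.exp (2 * p.2) := Real.exp_pos _
  have hinv : 4 < 1/h := by rw [lt_div_iff₀ h0]; linarith
  have hylb : -(1/2) < p.2 := by nlinarith
  have hyub : p.2 < 1/h := by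
    by_contra hcon
    push_neg at hcon
    have hy1 : 1 ≤ p.2 := by linarith
    have hexp : p.2 + 1 ≤ Real.exp p.2 := Real.add_one_le_exp p.2
    have hexp2 : (p.2 + 1)^2 ≤ Real.exp (2 * p.2) := by
      have h2 : Real.exp (2 * p.2) = Real.exp p.2 * Real.exp p.2 := by
        rw [← Real.exp_add]; ring_nf
      nlinarith
    have h2 : 1 ≤ h * p.2 := by
      rw [div_le_iff₀ h0] at hcon; linarith
    nlinarith
  have hyb : |p.2| ≤ 1/h + 2 := abs_le.mpr ⟨by linarith, by linarith⟩
  refine ⟨abs_le.mpr ⟨?_, ?_⟩, hyb⟩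
  · by_contra hcon; push_neg at hcon
    nlinarith [sq_nonneg (p.1 + (1/h + 2))]
  · by_contra hcon; push_neg at hcon
    nlinarith [sq_nonneg (p.1 - (1/h + 2))]

lemma level_norm_le {h : ℝ} (h0 : 0 < h) (h4 : h < 1/4) {p : ℝ × ℝ}
    (hp : canardH p = h) : ‖p‖ ≤ 1/h + 2 := by
  obtain ⟨l1, l2⟩ := level_bound h0 h4 hp
  rw [Prod.norm_def]
  exact max_le (by rwa [Real.norm_eq_abs]) (by rwa [Real.norm_eq_abs])

lemma canardH_neg_fst (p : ℝ × ℝ) : canardH (-p.1, p.2) = canardH p := by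
  simp [canardH]

/-- Chain rule: `H` is a first integral. -/
lemma hasDerivAt_H {X Y : ℝ → ℝ} {t : ℝ}
    (hx : HasDerivAt X ((X t)^2 - Y t) t) (hy : HasDerivAt Y (X t) t) :
    HasDerivAt (fun s => canardH (X s, Y s)) 0 t := by
  have he : HasDerivAt (fun s => Real.exp (-2 * Y s)) (Real.exp (-2 * Y t) * (-2 * X t)) t :=
    (hy.const_mul (-2)).exp
  have hin : HasDerivAt (fun s => Y s - X s ^ 2 + 1/2)
      (X t - (2 : ℕ) * X t ^ (2 - 1) * ((X t) ^ 2 - Y t)) t :=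
    (hy.sub (hx.pow 2)).add_const (1/2)
  have H1 := (he.mul hin).const_mul (1/2 : ℝ)
  have hfun : (fun s => canardH (X s, Y s)) =
      fun s => (1/2 : ℝ) * (Real.exp (-2 * Y s) * (Y s - X s ^ 2 + 1/2)) := by
    funext s; simp [canardH]; ring
  rw [hfun]
  refine HasDerivAt.congr_deriv H1 ?_
  push_cast
  ring

/-- Solutions of the clamped field on a compact interval exist (Picard–Lindelöf). -/
lemma exists_Icc_sol {M : ℝ} (hM : 0 ≤ M) (p₀ : ℝ × ℝ) (n : ℕ) :
    ∃ f : ℝ → ℝ × ℝ, f 0 = p₀ ∧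
      ∀ t ∈ Icc (-(n:ℝ)) n, HasDerivWithinAt f (cf M (f t)) (Icc (-(n:ℝ)) n) t := by
  have hpl : IsPicardLindelof (fun _ p => cf M p) (tmin := -(n:ℝ)) (tmax := n) ⟨0, by simp⟩ p₀
      (Real.toNNReal ((M^2+M) * n)) 0 (Real.toNNReal (M^2+M)) (Real.toNNReal (2*M+1)) :=
    { lipschitzOnWith := fun _ _ => (cf_lip hM).lipschitzOnWith
      continuousOn := fun _ _ => continuousOn_const
      norm_le := fun _ _ x _ => (cf_bound hM x).trans (Real.le_coe_toNNReal _)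
      mul_max_le := by
        have h1 : 0 ≤ M^2+M := by positivity
        simp [Real.coe_toNNReal _ h1, Real.coe_toNNReal _ (by positivity : (0:ℝ) ≤ (M^2+M)*n)] }
  obtain ⟨f, hf0, hf⟩ := hpl.exists_eq_forall_mem_Icc_hasDerivWithinAt₀
  exact ⟨f, hf0, hf⟩

/-- Uniqueness of solutions of the clamped field on a compact interval. -/
lemma sol_unique {M : ℝ} (hM : 0 ≤ M) {a b c : ℝ} (hc : c ∈ Icc a b)
    {f g : ℝ → ℝ × ℝ}
    (hf : ∀ t ∈ Icc a b, HasDerivWithinAt f (cf M (f t)) (Icc a b) t)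
    (hg : ∀ t ∈ Icc a b, HasDerivWithinAt g (cf M (g t)) (Icc a b) t)
    (hfg : f c = g c) : EqOn f g (Icc a b) := by
  have hfc : ContinuousOn f (Icc a b) := fun t ht => (hf t ht).continuousWithinAt
  have hgc : ContinuousOn g (Icc a b) := fun t ht => (hg t ht).continuousWithinAt
  have hsplit : Icc a b = Icc a c ∪ Icc c b := (Icc_union_Icc_eq_Icc hc.1 hc.2).symm
  rw [hsplit]
  apply EqOn.union
  · -- left part, initial value at right end c
    apply ODE_solution_unique_of_mem_Icc_left
      (fun _ _ => (cf_lip hM).lipschitzOnWith (s := univ))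
      (hfc.mono (Icc_subset_Icc le_rfl hc.2)) ?_ (fun _ _ => trivial)
      (hgc.mono (Icc_subset_Icc le_rfl hc.2)) ?_ (fun _ _ => trivial) hfg
    · intro t ht
      exact (hf t ⟨ht.1.le, ht.2.trans hc.2⟩).mono_of_mem_nhdsWithin
        (Icc_mem_nhdsLE_of_mem ⟨ht.1, ht.2.trans hc.2⟩)
    · intro t ht
      exact (hg t ⟨ht.1.le, ht.2.trans hc.2⟩).mono_of_mem_nhdsWithin
        (Icc_mem_nhdsLE_of_mem ⟨ht.1, ht.2.trans hc.2⟩)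
  · -- right part, initial value at left end c
    apply ODE_solution_unique (fun _ => cf_lip hM)
      (hfc.mono (Icc_subset_Icc hc.1 le_rfl)) ?_
      (hgc.mono (Icc_subset_Icc hc.1 le_rfl)) ?_ hfg
    · intro t ht
      exact (hf t ⟨hc.1.trans ht.1, ht.2.le⟩).mono_of_mem_nhdsWithin
        (Icc_mem_nhdsGE_of_mem ⟨hc.1.trans ht.1, ht.2⟩)
    · intro t ht
      exact (hg t ⟨hc.1.trans ht.1, ht.2.le⟩).mono_of_mem_nhdsWithin
        (Icc_mem_nhdsGE_of_mem ⟨hc.1.trans ht.1, ht.2⟩)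

/-- Global uniqueness for the clamped field. -/
lemma global_unique {M : ℝ} (hM : 0 ≤ M) {f g : ℝ → ℝ × ℝ} {c : ℝ}
    (hf : ∀ t, HasDerivAt f (cf M (f t)) t) (hg : ∀ t, HasDerivAt g (cf M (g t)) t)
    (hfg : f c = g c) : f = g := by
  funext t
  exact sol_unique hM (a := min c t) (b := max c t)
    ⟨min_le_left c t, le_max_left c t⟩
    (fun s _ => (hf s).hasDerivWithinAt) (fun s _ => (hg s).hasDerivWithinAt) hfg
    ⟨min_le_right c t, le_max_right c t⟩

/-- Global existence for the clamped field. -/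
lemma exists_global_sol {M : ℝ} (hM : 0 ≤ M) (p₀ : ℝ × ℝ) :
    ∃ φ : ℝ → ℝ × ℝ, φ 0 = p₀ ∧ ∀ t, HasDerivAt φ (cf M (φ t)) t := by
  choose f hf0 hfd using exists_Icc_sol hM p₀
  have hconsist : ∀ m n : ℕ, m ≤ n → EqOn (f m) (f n) (Icc (-(m:ℝ)) m) := by
    intro m n hmn
    have hsub : Icc (-(m:ℝ)) m ⊆ Icc (-(n:ℝ)) n := by
      apply Icc_subset_Icc <;> [simp; skip] <;> exact_mod_cast hmn
    exact sol_unique hM (c := 0)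
      ⟨neg_nonpos.mpr (Nat.cast_nonneg m), Nat.cast_nonneg m⟩ (hfd m)
      (fun t ht => ((hfd n) t (hsub ht)).mono hsub)
      (by rw [hf0, hf0])
  set φ : ℝ → ℝ × ℝ := fun t => f (⌊|t|⌋₊ + 1) t with hφ
  have agree : ∀ (N : ℕ) (t : ℝ), |t| ≤ N → φ t = f N t := by
    intro N t htN
    have h1 : |t| ≤ (⌊|t|⌋₊ + 1 : ℕ) := by
      push_cast
      exact (Nat.lt_floor_add_one |t|).le
    have hmem : ∀ (K : ℕ), |t| ≤ K → t ∈ Icc (-(K:ℝ)) K := by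
      intro K hK
      rw [abs_le] at hK
      exact ⟨by linarith [hK.1], hK.2⟩
    rcases le_total (⌊|t|⌋₊ + 1) N with hle | hle
    · exact hconsist _ _ hle (hmem _ h1)
    · exact (hconsist _ _ hle (hmem _ htN)).symm
  refine ⟨φ, ?_, ?_⟩
  · have : φ 0 = f 1 0 := agree 1 0 (by norm_num)
    rw [this, hf0]
  · intro t
    set N : ℕ := ⌊|t|⌋₊ + 1 with hN
    have htN : |t| < N := by
      rw [hN]; push_cast; exact Nat.lt_floor_add_one |t|
    have htmem : t ∈ Icc (-(N:ℝ)) N := by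
      rw [abs_lt] at htN
      exact ⟨by linarith [htN.1], htN.2.le⟩
    have hder : HasDerivAt (f N) (cf M (f N t)) t := by
      apply (hfd N t htmem).hasDerivAt
      apply Icc_mem_nhds
      · rw [abs_lt] at htN; linarith [htN.1]
      · rw [abs_lt] at htN; exact htN.2
    have hev : φ =ᶠ[nhds t] f N := by
      have habs : ∀ᶠ s : ℝ in nhds t, |s| < (N:ℝ) :=
        Filter.Tendsto.eventually_lt_const htN (continuous_abs.tendsto t)
      filter_upwards [habs] with s hs
      exact agree N s hs.le
    have := hder.congr_of_eventuallyEq hev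
    rwa [← hev.self_of_nhds] at this

end CanardAux
end Part2

section Part3
open Real Set CanardAux

namespace CanardAux

lemma continuous_canardH : Continuous canardH := by
  unfold canardH; fun_prop

lemma comp_derivs {M : ℝ} {φ : ℝ → ℝ × ℝ} {t : ℝ}
    (hφ : HasDerivAt φ (cf M (φ t)) t)
    (h1 : |(φ t).1| ≤ M) (h2 : |(φ t).2| ≤ M) :
    HasDerivAt (fun s => (φ s).1) (((φ t).1)^2 - (φ t).2) t ∧
    HasDerivAt (fun s => (φ s).2) ((φ t).1) t := by
  have e := cf_eq_tf h1 h2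
  have hX : HasDerivAt (fun s => (φ s).1) ((cf M (φ t)).1) t :=
    (ContinuousLinearMap.fst ℝ ℝ ℝ).hasFDerivAt.comp_hasDerivAt t hφ
  have hY : HasDerivAt (fun s => (φ s).2) ((cf M (φ t)).2) t :=
    (ContinuousLinearMap.snd ℝ ℝ ℝ).hasFDerivAt.comp_hasDerivAt t hφ
  rw [e] at hX hY
  exact ⟨hX, hY⟩

lemma H_deriv_zero {M : ℝ} {φ : ℝ → ℝ × ℝ} {t : ℝ}
    (hφ : HasDerivAt φ (cf M (φ t)) t) (h1 : |(φ t).1| ≤ M) (h2 : |(φ t).2| ≤ M) :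
    HasDerivAt (fun s => canardH (φ s)) 0 t := by
  obtain ⟨hX, hY⟩ := comp_derivs hφ h1 h2
  have := hasDerivAt_H (X := fun s => (φ s).1) (Y := fun s => (φ s).2) hX hY
  simpa using this

lemma conserve_fwd {h : ℝ} (h0 : 0 < h) (h4 : h < 1/4) {φ : ℝ → ℝ × ℝ}
    (hφ : ∀ t, HasDerivAt φ (cf (1/h + 4) (φ t)) t) (hinit : canardH (φ 0) = h) :
    ∀ t, 0 ≤ t → canardH (φ t) = h := by
  have hinv : 4 < 1/h := by rw [lt_div_iff₀ h0]; linarith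
  have hcont : Continuous φ := continuous_iff_continuousAt.mpr fun t => (hφ t).continuousAt
  have key : ∀ T, 0 ≤ T → (∀ s, 0 ≤ s → s < T → ‖φ s‖ ≤ 1/h + 3) → canardH (φ T) = h := by
    intro T hT hb
    have hcst := constant_of_has_deriv_right_zero (f := fun s => canardH (φ s)) (a := 0) (b := T)
      ((continuous_canardH.comp hcont).continuousOn) ?_
    · exact (hcst T ⟨hT, le_rfl⟩).trans hinit
    · intro s hs
      have hb' := hb s hs.1 hs.2
      have h1 : |(φ s).1| ≤ 1/h + 4 := by
        have := (norm_fst_le (φ s)).trans hb'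
        rw [Real.norm_eq_abs] at this; linarith
      have h2 : |(φ s).2| ≤ 1/h + 4 := by
        have := (norm_snd_le (φ s)).trans hb'
        rw [Real.norm_eq_abs] at this; linarith
      exact (H_deriv_zero (hφ s) h1 h2).hasDerivWithinAt
  have bound : ∀ t, 0 ≤ t → ‖φ t‖ ≤ 1/h + 3 := by
    by_contra hc
    push_neg at hc
    obtain ⟨t', ht'0, hgt⟩ := hc
    set S := {t : ℝ | 0 ≤ t ∧ 1/h + 3 ≤ ‖φ t‖} with hS
    have hne : S.Nonempty := ⟨t', ht'0, hgt.le⟩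
    have hcl : IsClosed S := by
      rw [hS, setOf_and]
      exact IsClosed.inter isClosed_Ici (isClosed_le continuous_const hcont.norm)
    have hbb : BddBelow S := ⟨0, fun u hu => hu.1⟩
    have hTmem : sInf S ∈ S := hcl.csInf_mem hne hbb
    have hsm : ∀ s, 0 ≤ s → s < sInf S → ‖φ s‖ ≤ 1/h + 3 := by
      intro s hs0 hsT
      by_contra hcc; push_neg at hcc
      exact absurd (csInf_le hbb ⟨hs0, hcc.le⟩) (not_le.mpr hsT)
    have hH := key _ hTmem.1 hsm
    have := level_norm_le h0 h4 hH
    linarith [hTmem.2]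
  intro t ht
  exact key t ht fun s hs0 _ => bound s hs0

/-- Reflected solution: `t ↦ (-(φ (2c - t)).1, (φ (2c - t)).2)` solves the same system. -/
lemma refl_sol {M : ℝ} (hM : 0 ≤ M) {φ : ℝ → ℝ × ℝ}
    (hφ : ∀ t, HasDerivAt φ (cf M (φ t)) t) (c : ℝ) (t : ℝ) :
    HasDerivAt (fun s => ((-(φ (2*c - s)).1, (φ (2*c - s)).2) : ℝ × ℝ))
      (cf M (-(φ (2*c - t)).1, (φ (2*c - t)).2)) t := by
  have hg : HasDerivAt (fun s : ℝ => 2*c - s) (-1) t := (hasDerivAt_id t).const_sub (2*c)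
  have hcomp : HasDerivAt (fun s => φ (2*c - s)) ((-1 : ℝ) • cf M (φ (2*c - t))) t :=
    HasDerivAt.scomp t (hφ (2*c - t)) hg
  have hX : HasDerivAt (fun s => (φ (2*c - s)).1) (((-1 : ℝ) • cf M (φ (2*c - t))).1) t :=
    (ContinuousLinearMap.fst ℝ ℝ ℝ).hasFDerivAt.comp_hasDerivAt t hcomp
  have hY : HasDerivAt (fun s => (φ (2*c - s)).2) (((-1 : ℝ) • cf M (φ (2*c - t))).2) t :=
    (ContinuousLinearMap.snd ℝ ℝ ℝ).hasFDerivAt.comp_hasDerivAt t hcomp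
  have pair := (hX.neg).prodMk hY
  rw [cf_reflect hM]
  refine HasDerivAt.congr_deriv pair ?_
  ext <;> simp [neg_smul]

/-- Shifted solution. -/
lemma shift_sol {M : ℝ} {φ : ℝ → ℝ × ℝ}
    (hφ : ∀ t, HasDerivAt φ (cf M (φ t)) t) (c : ℝ) (t : ℝ) :
    HasDerivAt (fun s => φ (s + c)) (cf M (φ (t + c))) t := by
  have hg : HasDerivAt (fun s : ℝ => s + c) 1 t := (hasDerivAt_id t).add_const c
  have := HasDerivAt.scomp t (hφ (t + c)) hg
  rw [one_smul] at this
  exact this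

/-- Global conservation of `canardH`. -/
lemma conserve_all {h : ℝ} (h0 : 0 < h) (h4 : h < 1/4) {φ : ℝ → ℝ × ℝ}
    (hφ : ∀ t, HasDerivAt φ (cf (1/h + 4) (φ t)) t) (hinit : canardH (φ 0) = h) :
    ∀ t, canardH (φ t) = h := by
  have hinv : 4 < 1/h := by rw [lt_div_iff₀ h0]; linarith
  have hM : (0:ℝ) ≤ 1/h + 4 := by linarith
  intro t
  rcases le_total 0 t with ht | ht
  · exact conserve_fwd h0 h4 hφ hinit t ht
  · -- use the reflected solution around c = 0
    have hψ := refl_sol hM hφ 0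
    simp only [mul_zero, zero_sub] at hψ
    have hψ0 : canardH ((fun s => ((-(φ (-s)).1, (φ (-s)).2) : ℝ × ℝ)) 0) = h := by
      simp only [neg_zero]
      rw [canardH_neg_fst]
      exact hinit
    have := conserve_fwd h0 h4 hψ hψ0 (-t) (by linarith)
    simp only [neg_neg] at this
    rw [canardH_neg_fst] at this
    exact this

end CanardAux
end Part3

section Part4
open Real Set Filter CanardAux

namespace CanardAux

lemma exists_zero {h : ℝ} (h0 : 0 < h) (h4 : h < 1/4) {φ : ℝ → ℝ × ℝ}
    (hφ : ∀ t, HasDerivAt φ (cf (1/h + 4) (φ t)) t)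
    (hK : ∀ t, canardH (φ t) = h) :
    ∃ t, 0 ≤ t ∧ (φ t).1 = 0 := by
  by_contra hcon
  push_neg at hcon
  set X : ℝ → ℝ := fun t => (φ t).1 with hXdef
  set Y : ℝ → ℝ := fun t => (φ t).2 with hYdef
  have hinv : 4 < 1/h := by rw [lt_div_iff₀ h0]; linarith
  have hbnd : ∀ t, |X t| ≤ 1/h + 2 ∧ |Y t| ≤ 1/h + 2 := fun t => level_bound h0 h4 (hK t)
  have hder : ∀ t, HasDerivAt X ((X t)^2 - Y t) t ∧ HasDerivAt Y (X t) t := fun t =>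
    comp_derivs (hφ t) ((hbnd t).1.trans (by linarith)) ((hbnd t).2.trans (by linarith))
  have hXc : Continuous X := continuous_iff_continuousAt.mpr fun t => (hder t).1.continuousAt
  have hYc : Continuous Y := continuous_iff_continuousAt.mpr fun t => (hder t).2.continuousAt
  set σ : ℝ := if 0 < X 0 then 1 else -1 with hσdef
  have hσ2 : σ = 1 ∨ σ = -1 := by rw [hσdef]; split_ifs <;> simp
  have hσX0 : 0 < σ * X 0 := by
    rw [hσdef]; split_ifs with hpos
    · simpa using hpos
    · push_neg at hpos
      have := lt_of_le_of_ne hpos (hcon 0 le_rfl)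
      nlinarith
  have hsign : ∀ t, 0 ≤ t → 0 < σ * X t := by
    intro t ht
    by_contra hle; push_neg at hle
    have hcontX : ContinuousOn (fun s => σ * X s) (uIcc 0 t) :=
      (continuous_const.mul hXc).continuousOn
    have h0mem : (0:ℝ) ∈ uIcc (σ * X 0) (σ * X t) := by
      rw [mem_uIcc]; exact Or.inr ⟨hle, hσX0.le⟩
    obtain ⟨u, hu, hu0⟩ := intermediate_value_uIcc hcontX h0mem
    have hu0' : X u = 0 := by
      rcases hσ2 with hh | hh <;> rw [hh] at hu0 <;> simpa using hu0
    have hupos : 0 ≤ u := by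
      rw [uIcc_of_le ht] at hu; exact hu.1
    exact hcon u hupos hu0'
  -- monotone limit of σ • Y
  have hmono : StrictMonoOn (fun t => σ * Y t) (Ici 0) := by
    apply strictMonoOn_of_deriv_pos (convex_Ici 0) ((continuous_const.mul hYc).continuousOn)
    intro t ht
    rw [interior_Ici] at ht
    show 0 < deriv (fun y => σ * Y y) t
    rw [((hder t).2.const_mul σ).deriv]
    exact hsign t ht.le
  set Z : ℝ → ℝ := fun t => σ * Y (max t 0) with hZdef
  have hZmono : Monotone Z := fun a b hab =>
    hmono.monotoneOn (le_max_right a 0) (le_max_right b 0) (max_le_max hab le_rfl)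
  have hσY : ∀ t, |σ * Y t| ≤ 1/h + 2 := by
    intro t
    rcases hσ2 with hh | hh <;> rw [hh] <;> simpa using (hbnd t).2
  have hZbdd : BddAbove (range Z) := by
    refine ⟨1/h + 2, ?_⟩
    rintro _ ⟨t, rfl⟩
    exact (le_abs_self _).trans (hσY _)
  have hZlim : Tendsto Z atTop (nhds (⨆ t, Z t)) := tendsto_atTop_ciSup hZmono hZbdd
  set L' : ℝ := ⨆ t, Z t with hL'def
  set L : ℝ := σ * L' with hLdef
  have hσσ : σ * σ = 1 := by rcases hσ2 with hh | hh <;> rw [hh] <;> ring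
  have hYlim : Tendsto Y atTop (nhds L) := by
    have h1 : Tendsto (fun t => σ * Z t) atTop (nhds (σ * L')) := hZlim.const_mul σ
    apply h1.congr'
    filter_upwards [eventually_ge_atTop (0:ℝ)] with t ht
    show σ * (σ * Y (max t 0)) = Y t
    rw [max_eq_left ht, ← mul_assoc, hσσ, one_mul]
  -- the curve equation
  have hXsq : ∀ t, (X t)^2 = Y t + 1/2 - 2*h*Real.exp (2*Y t) := fun t => level_eq (hK t)
  have contg : Continuous (fun y : ℝ => y + 1/2 - 2*h*Real.exp (2*y)) := by fun_prop
  set gL : ℝ := L + 1/2 - 2*h*Real.exp (2*L) with hgLdef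
  have hXsqlim : Tendsto (fun t => (X t)^2) atTop (nhds gL) := by
    have := (contg.tendsto L).comp hYlim
    exact this.congr fun t => (hXsq t).symm
  have hXeq : ∀ t, 0 ≤ t → X t = σ * Real.sqrt ((X t)^2) := by
    intro t ht
    have h1 : σ * X t = |X t| := by
      rcases hσ2 with hh | hh <;> rw [hh] at hsign ⊢
      · simpa using abs_of_pos (by simpa using hsign t ht) |>.symm
      · have : X t < 0 := by nlinarith [hsign t ht]
        rw [abs_of_neg this]; ring
    rw [Real.sqrt_sq_eq_abs, ← h1, ← mul_assoc, hσσ, one_mul]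
  have hXlim : Tendsto X atTop (nhds (σ * Real.sqrt gL)) := by
    have hsq : Tendsto (fun t => σ * Real.sqrt ((X t)^2)) atTop (nhds (σ * Real.sqrt gL)) :=
      ((Real.continuous_sqrt.tendsto gL).comp hXsqlim).const_mul σ
    apply hsq.congr'
    filter_upwards [eventually_ge_atTop (0:ℝ)] with t ht
    exact (hXeq t ht).symm
  rcases eq_or_lt_of_le (Real.sqrt_nonneg gL) with hℓ0 | hℓpos
  · -- sqrt gL = 0 : the solution converges to an equilibrium-like point, contradiction
    have hgLle : gL ≤ 0 := Real.sqrt_eq_zero'.mp hℓ0.symm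
    have hgLge : 0 ≤ gL := ge_of_tendsto' hXsqlim fun t => sq_nonneg _
    have hgL : gL = 0 := le_antisymm hgLle hgLge
    have hLne : L ≠ 0 := by
      intro hL0
      rw [hgLdef, hL0] at hgL
      simp [Real.exp_zero] at hgL
      nlinarith
    have hX0 : Tendsto X atTop (nhds 0) := by
      have : σ * Real.sqrt gL = 0 := by rw [← hℓ0]; ring
      rwa [this] at hXlim
    have hdlim : Tendsto (fun t => (X t)^2 - Y t + L) atTop (nhds 0) := by
      have := (hXsqlim.sub hYlim).add_const L
      rw [hgL] at this
      simpa using this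
    set l : ℝ := |L| with hldef
    have hl : 0 < l := abs_pos.mpr hLne
    have e1 : ∀ᶠ t in atTop, |X t| < l/8 :=
      Filter.Tendsto.eventually_lt_const (by positivity) (by simpa using hX0.abs)
    have e2 : ∀ᶠ t in atTop, |(X t)^2 - Y t + L| < l/2 :=
      Filter.Tendsto.eventually_lt_const (by positivity) (by simpa using hdlim.abs)
    obtain ⟨T, hT⟩ := eventually_atTop.mp (e1.and e2)
    obtain ⟨c, hcmem, hslope⟩ := exists_hasDerivAt_eq_slope X (fun t => (X t)^2 - Y t)
      (by linarith : T < T + 1) hXc.continuousOn (fun t _ => (hder t).1)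
    have hTc := hT c (le_of_lt hcmem.1)
    have hT1 := hT (T+1) (by linarith)
    have hTT := hT T le_rfl
    rw [add_sub_cancel_left, div_one] at hslope
    have k1 := abs_le.mp hTc.2.le
    have k2 := abs_le.mp hT1.1.le
    have k3 := abs_le.mp hTT.1.le
    have : |L| ≤ 3*l/4 := abs_le.mpr ⟨by linarith [hslope], by linarith [hslope]⟩
    rw [← hldef] at this
    linarith
  · -- sqrt gL > 0 : Y escapes to infinity, contradiction with boundedness
    set ℓ : ℝ := Real.sqrt gL with hℓdef
    have hσXlim : Tendsto (fun t => σ * X t) atTop (nhds ℓ) := by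
      have := hXlim.const_mul σ
      have he : σ * (σ * Real.sqrt gL) = ℓ := by rw [← mul_assoc, hσσ, one_mul]
      rwa [he] at this
    have hev : ∀ᶠ t in atTop, ℓ/2 ≤ σ * X t :=
      hσXlim.eventually (eventually_ge_nhds (by linarith))
    obtain ⟨T, hT⟩ := eventually_atTop.mp hev
    set b : ℝ := T + (8 * (1/h) + 20)/ℓ with hbdef
    have hTb : T < b := by
      rw [hbdef]
      have : 0 < (8 * (1/h) + 20)/ℓ := by positivity
      linarith
    obtain ⟨c, hcmem, hslope⟩ := exists_hasDerivAt_eq_slope (fun t => σ * Y t)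
      (fun t => σ * X t) hTb ((continuous_const.mul hYc).continuousOn)
      (fun t _ => (hder t).2.const_mul σ)
    have hXcge : ℓ/2 ≤ σ * X c := hT c (le_of_lt hcmem.1)
    have hbT : b - T = (8 * (1/h) + 20)/ℓ := by rw [hbdef]; ring
    have heq : σ * Y b - σ * Y T = (σ * X c) * (b - T) := by
      rw [eq_div_iff (by linarith : b - T ≠ 0)] at hslope
      linarith [hslope]
    have hgrow : (ℓ/2) * (b - T) ≤ (σ * X c) * (b - T) :=
      mul_le_mul_of_nonneg_right hXcge (by linarith)
    have hval : (ℓ/2) * (b - T) = 4 * (1/h) + 10 := by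
      rw [hbT]
      field_simp
      ring
    have b1 := abs_le.mp (hσY b)
    have b2 := abs_le.mp (hσY T)
    have final : 4 * (1/h) + 10 ≤ 2 * (1/h) + 4 := by
      calc 4 * (1/h) + 10 = (ℓ/2) * (b - T) := hval.symm
        _ ≤ (σ * X c) * (b - T) := hgrow
        _ = σ * Y b - σ * Y T := heq.symm
        _ ≤ (1/h + 2) - (-(1/h + 2)) := by linarith [b1.2, b2.1]
        _ = 2 * (1/h) + 4 := by ring
    linarith

end CanardAux
end Part4

section MainProof
open Real Set CanardAux

/-- Every maximal solution of `x' = x² - y`, `y' = x` with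
`0 < H(x 0, y 0) < 1/4` is a nonconstant periodic orbit: through every such
initial point there is a globally defined solution `(x, y)` which is
nonconstant and periodic of some period `P > 0`, and every local solution
through the same point coincides with it (so the maximal solution is this
global periodic one). -/
theorem canard_level_sets_are_periodic_orbits
    (x₀ y₀ : ℝ) (h₀ : 0 < canardH (x₀, y₀)) (h₁ : canardH (x₀, y₀) < 1 / 4) :
    ∃ x y : ℝ → ℝ, x 0 = x₀ ∧ y 0 = y₀ ∧
      (∀ t : ℝ, HasDerivAt x ((x t) ^ 2 - y t) t) ∧
      (∀ t : ℝ, HasDerivAt y (x t) t) ∧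
      (∃ P > (0 : ℝ), ∀ t : ℝ, x (t + P) = x t ∧ y (t + P) = y t) ∧
      ¬ (∀ t : ℝ, x t = x₀ ∧ y t = y₀) ∧
      (∀ (I : Set ℝ), Convex ℝ I → (0 : ℝ) ∈ I → ∀ u v : ℝ → ℝ,
        u 0 = x₀ → v 0 = y₀ →
        (∀ t ∈ I, HasDerivAt u ((u t) ^ 2 - v t) t) →
        (∀ t ∈ I, HasDerivAt v (u t) t) →
        ∀ t ∈ I, u t = x t ∧ v t = y t) := by
  set h : ℝ := canardH (x₀, y₀) with hdef
  have hinv : 4 < 1/h := by rw [lt_div_iff₀ h₀]; linarith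
  have hM0 : (0:ℝ) ≤ 1/h + 4 := by linarith
  obtain ⟨φ, hφ0, hφd⟩ := exists_global_sol hM0 (x₀, y₀)
  have hK : ∀ t, canardH (φ t) = h := conserve_all h₀ h₁ hφd (by rw [hφ0])
  have hbnd : ∀ t, |(φ t).1| ≤ 1/h + 2 ∧ |(φ t).2| ≤ 1/h + 2 :=
    fun t => level_bound h₀ h₁ (hK t)
  have hder : ∀ t, HasDerivAt (fun s => (φ s).1) (((φ t).1)^2 - (φ t).2) t ∧
      HasDerivAt (fun s => (φ s).2) ((φ t).1) t :=
    fun t => comp_derivs (hφd t) ((hbnd t).1.trans (by linarith)) ((hbnd t).2.trans (by linarith))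
  -- two zeros of the x-component
  obtain ⟨t₁, ht₁0, hz₁⟩ := exists_zero h₀ h₁ hφd hK
  obtain ⟨w, hw0, hzw⟩ := exists_zero h₀ h₁ (fun t => shift_sol hφd (t₁ + 1) t)
    (fun t => hK (t + (t₁ + 1)))
  set t₂ : ℝ := w + (t₁ + 1) with ht₂def
  have hz₂ : (φ t₂).1 = 0 := hzw
  have ht₁₂ : t₁ < t₂ := by rw [ht₂def]; linarith
  -- reflection symmetry: reflecting at a zero of x reproduces the solution
  have hreflid : ∀ c, (φ c).1 = 0 →
      ∀ t, (φ (2*c - t)).1 = -(φ t).1 ∧ (φ (2*c - t)).2 = (φ t).2 := by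
    intro c hc
    have hid : (fun s => ((-(φ (2*c - s)).1, (φ (2*c - s)).2) : ℝ × ℝ)) = φ := by
      apply global_unique hM0 (refl_sol hM0 hφd c) hφd (c := c)
      show ((-(φ (2*c - c)).1, (φ (2*c - c)).2) : ℝ × ℝ) = φ c
      rw [show 2*c - c = c from by ring]
      rw [Prod.ext_iff]
      exact ⟨by rw [hc]; exact neg_zero, rfl⟩
    intro t
    have := congrFun hid t
    rw [Prod.ext_iff] at this
    obtain ⟨e1, e2⟩ := this
    simp only at e1 e2
    constructor
    · linarith [e1]
    · exact e2
  have id₁ := hreflid t₁ hz₁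
  have id₂ := hreflid t₂ hz₂
  set P : ℝ := 2*(t₂ - t₁) with hPdef
  have hper : ∀ t, (φ (t + P)).1 = (φ t).1 ∧ (φ (t + P)).2 = (φ t).2 := by
    intro t
    have harg : 2*t₂ - (t + P) = 2*t₁ - t := by rw [hPdef]; ring
    have a2 := id₂ (t + P)
    rw [harg] at a2
    obtain ⟨b1, b2⟩ := id₁ t
    constructor
    · have := a2.1; rw [b1] at this; linarith
    · have := a2.2; rw [b2] at this; linarith
  refine ⟨fun s => (φ s).1, fun s => (φ s).2,
    by show (φ 0).1 = x₀; rw [hφ0], by show (φ 0).2 = y₀; rw [hφ0],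
    fun t => (hder t).1, fun t => (hder t).2,
    ⟨P, by rw [hPdef]; linarith, hper⟩, ?_, ?_⟩
  · -- nonconstant
    intro hconst
    have hXc : (fun s => (φ s).1) = fun _ => x₀ := funext fun t => (hconst t).1
    have hYc : (fun s => (φ s).2) = fun _ => y₀ := funext fun t => (hconst t).2
    have d1 : ((φ 0).1)^2 - (φ 0).2 = 0 := by
      have h1 := (hder 0).1
      rw [hXc] at h1
      exact h1.unique (hasDerivAt_const 0 x₀)
    have d2 : (φ 0).1 = 0 := by
      have h2 := (hder 0).2
      rw [hYc] at h2
      exact h2.unique (hasDerivAt_const 0 y₀)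
    have hx0 : x₀ = 0 := by rw [← (hconst 0).1]; exact d2
    have hy0 : y₀ = 0 := by
      have := (hconst 0).2
      rw [← this]
      nlinarith [d1, d2]
    rw [hdef, hx0, hy0] at h₁
    norm_num [canardH] at h₁
  · -- uniqueness of local solutions
    intro I hIconv hI0 u v hu0 hv0 hud hvd t htI
    set lo : ℝ := min 0 t with hlo
    set hi : ℝ := max 0 t with hhi
    have hsub : Icc lo hi ⊆ I := hIconv.ordConnected.out
      (by rcases min_cases 0 t with ⟨he, _⟩ | ⟨he, _⟩ <;> rw [hlo, he] <;> assumption)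
      (by rcases max_cases 0 t with ⟨he, _⟩ | ⟨he, _⟩ <;> rw [hhi, he] <;> assumption)
    have hder0 : ∀ s ∈ I, HasDerivAt (fun r => canardH (u r, v r)) 0 s := fun s hs =>
      hasDerivAt_H (X := u) (Y := v) (hud s hs) (hvd s hs)
    have h0mem : (0:ℝ) ∈ Icc lo hi := ⟨min_le_left _ _, le_max_left _ _⟩
    have htmem : t ∈ Icc lo hi := ⟨min_le_right _ _, le_max_right _ _⟩
    have hconst := constant_of_has_deriv_right_zero (a := lo) (b := hi)
      (f := fun r => canardH (u r, v r))
      (fun s hs => ((hder0 s (hsub hs)).continuousAt).continuousWithinAt)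
      (fun s hs => (hder0 s (hsub (Ico_subset_Icc_self hs))).hasDerivWithinAt)
    have hcons : ∀ s ∈ Icc lo hi, canardH (u s, v s) = h := by
      intro s hs
      have e1 := hconst s hs
      have e2 := hconst 0 h0mem
      rw [e1, ← e2, hu0, hv0]
    -- the paired local solution solves the clamped field
    have hPcf : ∀ s ∈ Icc lo hi, HasDerivAt (fun r => ((u r, v r) : ℝ × ℝ))
        (cf (1/h + 4) (u s, v s)) s := by
      intro s hs
      have hb := level_bound h₀ h₁ (hcons s hs)
      rw [cf_eq_tf (p := (u s, v s)) (hb.1.trans (by linarith)) (hb.2.trans (by linarith))]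
      exact (hud s (hsub hs)).prodMk (hvd s (hsub hs))
    have hEq := sol_unique hM0 (a := lo) (b := hi) (c := 0) h0mem
      (f := fun r => ((u r, v r) : ℝ × ℝ)) (g := φ)
      (fun s hs => (hPcf s hs).hasDerivWithinAt)
      (fun s _ => (hφd s).hasDerivWithinAt)
      (by rw [hφ0]; rw [Prod.ext_iff]; exact ⟨hu0, hv0⟩)
    have := hEq htmem
    rw [Prod.ext_iff] at this
    exact ⟨this.1, this.2⟩

end MainProof
end

section
/- Let δ > 0 and let x₁, r₁, ε₁, λ₁ : [0,∞) → ℝ be differentiable and F : [0,∞) → ℝ be continuous with F(t) ≤ −δ for all t. Suppose that at every time t with x₁(t) ∈ [−1, 0], the equations x₁' = −(1/2)ε₁x₁F, r₁' = (1/2)r₁ε₁F, ε₁' = −ε₁²F, λ₁' = −(1/2)λ₁ε₁F hold, and assume x₁(0) ∈ [−1, 0), r₁(0) > 0, ε₁(0) > 0. Then there exists a smallest time t̃ ≥ 0 with x₁(t̃) = −1; on [0, t̃] the function x₁ is strictly decreasing (so it stays in [−1, x₁(0)]) and ε₁ is strictly increasing; and at the exit time the values r₁(t̃) = −x₁(0)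 r₁(0), ε₁(t̃) = ε₁(0)/x₁(0)², λ₁(t̃) = −λ₁(0)/x₁(0) are attained. (This is the statement that trajectories starting in the blown-up critical manifold to the left of the zero set of F reach its attracting boundary {x₁ = −1} in finite time, with limiting values determined by the conserved quantities x = r₁x₁, ε = r₁²ε₁, λ = r₁λ₁.) -/
/-!
While `x₁` stays in `[-1, x₁ 0] ⊆ [-1, 0]` the equations hold; there `ε₁` increases because
`F < 0`, so `x₁' ≤ ε₁(0) x₁(0) δ / 2 < 0`. Hence the trajectory remains in this interval only
for a bounded time. At the supremum `T` of these times it is still inside (closedness), and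
`x₁ T = -1`, since otherwise the negative derivative would keep it inside a little longer.
The exit values come from the first integrals `r₁ x₁`, `r₁² ε₁`, `r₁ λ₁` (the blow-down
coordinates `x`, `ε`, `λ`) evaluated at `x₁ T = -1`.
-/

open Set Topology

section Calculus

variable {f f' : ℝ → ℝ} {a b : ℝ}

theorem monotoneOn_Icc_of_hasDerivAt_nonneg (hf : ∀ s ∈ Icc a b, HasDerivAt f (f' s) s)
    (hf' : ∀ s ∈ Ioo a b, 0 ≤ f' s) : MonotoneOn f (Icc a b) :=
  monotoneOn_of_hasDerivWithinAt_nonneg (convex_Icc a b) (HasDerivAt.continuousOn hf)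
    (fun s hs => (hf s (interior_subset hs)).hasDerivWithinAt)
    (by rwa [interior_Icc])

theorem strictMonoOn_Icc_of_hasDerivAt_pos (hf : ∀ s ∈ Icc a b, HasDerivAt f (f' s) s)
    (hf' : ∀ s ∈ Ioo a b, 0 < f' s) : StrictMonoOn f (Icc a b) :=
  strictMonoOn_of_hasDerivWithinAt_pos (convex_Icc a b) (HasDerivAt.continuousOn hf)
    (fun s hs => (hf s (interior_subset hs)).hasDerivWithinAt)
    (by rwa [interior_Icc])

theorem strictAntiOn_Icc_of_hasDerivAt_neg (hf : ∀ s ∈ Icc a b, HasDerivAt f (f' s) s)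
    (hf' : ∀ s ∈ Ioo a b, f' s < 0) : StrictAntiOn f (Icc a b) :=
  strictAntiOn_of_hasDerivWithinAt_neg (convex_Icc a b) (HasDerivAt.continuousOn hf)
    (fun s hs => (hf s (interior_subset hs)).hasDerivWithinAt)
    (by rwa [interior_Icc])

theorem sub_le_mul_sub_of_hasDerivAt_le {C : ℝ} (hf : ∀ s ∈ Icc a b, HasDerivAt f (f' s) s)
    (hf' : ∀ s ∈ Ioo a b, f' s ≤ C) (hab : a ≤ b) : f b - f a ≤ C * (b - a) := by
  refine (convex_Icc a b).image_sub_le_mul_sub_of_deriv_le (HasDerivAt.continuousOn hf)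
    (fun s hs => (hf s (interior_subset hs)).differentiableAt.differentiableWithinAt)
    (fun s hs => ?_) a (left_mem_Icc.2 hab) b (right_mem_Icc.2 hab) hab
  rw [(hf s (interior_subset hs)).deriv]
  exact hf' s (by rwa [interior_Icc] at hs)

theorem eq_of_hasDerivAt_eq_zero (hf : ∀ s ∈ Icc a b, HasDerivAt f 0 s) (hab : a ≤ b) :
    f b = f a :=
  constant_of_has_deriv_right_zero (HasDerivAt.continuousOn hf)
    (fun s hs => (hf s (Ico_subset_Icc_self hs)).hasDerivWithinAt) b (right_mem_Icc.2 hab)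

theorem HasDerivAt.eventually_nhdsGT_lt {x f'₀ : ℝ} (hf : HasDerivAt f f'₀ x) (hf'₀ : f'₀ < 0) :
    ∀ᶠ y in 𝓝[>] x, f y < f x := by
  have hslope := (hasDerivWithinAt_iff_tendsto_slope' self_notMem_Ioi).1 hf.hasDerivWithinAt
  filter_upwards [hslope (Iio_mem_nhds hf'₀), self_mem_nhdsWithin] with y hy hxy
  exact (slope_neg_iff_of_le (le_of_lt hxy)).1 hy

end Calculus

section Continuation

variable {x : ℝ → ℝ} {a : ℝ}

theorem mapsTo_Icc_sSup {K : Set ℝ} (hK : IsClosed K) (hx : ∀ t, a ≤ t → ContinuousAt x t)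
    (ha : x a ∈ K) (hbdd : BddAbove {t | MapsTo x (Icc a t) K}) :
    a ≤ sSup {t | MapsTo x (Icc a t) K} ∧ MapsTo x (Icc a (sSup {t | MapsTo x (Icc a t) K})) K := by
  set A := {t | MapsTo x (Icc a t) K}
  have haA : a ∈ A := by simpa [A] using ha
  have haT : a ≤ sSup A := le_csSup hbdd haA
  refine ⟨haT, ?_⟩
  have hIco : MapsTo x (Ico a (sSup A)) K := fun s hs => by
    obtain ⟨t, htA, hst⟩ := exists_lt_of_lt_csSup ⟨a, haA⟩ hs.2
    exact htA ⟨hs.1, hst.le⟩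
  rcases haT.eq_or_lt with h | h
  · rwa [← h]
  · rw [← closure_Ico h.ne, ← hK.closure_eq]
    refine hIco.closure_of_continuousOn ?_
    rw [closure_Ico h.ne]
    exact continuousOn_of_forall_continuousAt fun t ht => hx t ht.1

theorem exists_gt_mapsTo_Icc_of_hasDerivAt_neg {x' b c T : ℝ} (haT : a ≤ T)
    (hmaps : MapsTo x (Icc a T) (Icc b c)) (hbT : b < x T) (hd : HasDerivAt x x' T)
    (hx' : x' < 0) : ∃ u > T, MapsTo x (Icc a u) (Icc b c) := by
  have hev : ∀ᶠ y in 𝓝[>] T, x y ∈ Icc b c := by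
    filter_upwards [hd.eventually_nhdsGT_lt hx',
      nhdsWithin_le_nhds (hd.continuousAt.eventually (eventually_gt_nhds hbT))] with y hlt hgt
    exact ⟨hgt.le, hlt.le.trans (hmaps ⟨haT, le_rfl⟩).2⟩
  obtain ⟨u, hTu, hu⟩ := mem_nhdsGT_iff_exists_Ioc_subset.1 hev
  exact ⟨u, hTu, Icc_union_Ioc_eq_Icc haT hTu.le ▸ hmaps.union hu⟩

theorem exists_mapsTo_Icc_eq_left {m c d : ℝ} (hcont : ∀ t, a ≤ t → ContinuousAt x t)
    (ha : x a ∈ Icc c d) (hm : m < 0)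
    (hdecay : ∀ t, a ≤ t → MapsTo x (Icc a t) (Icc c d) → x t - x a ≤ m * (t - a))
    (hderiv : ∀ t, a ≤ t → MapsTo x (Icc a t) (Icc c d) → ∃ x' < 0, HasDerivAt x x' t) :
    ∃ T, a ≤ T ∧ MapsTo x (Icc a T) (Icc c d) ∧ x T = c := by
  have hbdd : BddAbove {t | MapsTo x (Icc a t) (Icc c d)} := by
    refine ⟨a + (x a - c) / -m, fun t ht => ?_⟩
    rcases lt_or_ge t a with hta | hat
    · have := div_nonneg (sub_nonneg.2 ha.1) (neg_nonneg.2 hm.le)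
      linarith
    · have hct := (ht ⟨hat, le_rfl⟩).1
      have := hdecay t hat ht
      rw [← sub_le_iff_le_add', le_div_iff₀ (neg_pos.2 hm)]
      linarith
  obtain ⟨hT0, hT⟩ := mapsTo_Icc_sSup isClosed_Icc hcont ha hbdd
  refine ⟨_, hT0, hT, (hT ⟨hT0, le_rfl⟩).1.eq_or_lt.elim Eq.symm fun hlt => ?_⟩
  obtain ⟨x', hx', hd⟩ := hderiv _ hT0 hT
  obtain ⟨u, hTu, hu⟩ := exists_gt_mapsTo_Icc_of_hasDerivAt_neg hT0 hT hlt hd hx'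
  exact absurd (le_csSup hbdd hu) hTu.not_ge

end Continuation

/-- The chart-`K₁` equations on the time set `I`, with `l₁` standing for `λ₁`. -/
structure SolvesChartK1On (x₁ r₁ ε₁ l₁ F : ℝ → ℝ) (I : Set ℝ) : Prop where
  hasDerivAt_x₁ : ∀ t ∈ I, HasDerivAt x₁ (-(1 / 2) * ε₁ t * x₁ t * F t) t
  hasDerivAt_r₁ : ∀ t ∈ I, HasDerivAt r₁ ((1 / 2) * r₁ t * ε₁ t * F t) t
  hasDerivAt_ε₁ : ∀ t ∈ I, HasDerivAt ε₁ (-(ε₁ t) ^ 2 * F t) t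
  hasDerivAt_l₁ : ∀ t ∈ I, HasDerivAt l₁ (-(1 / 2) * l₁ t * ε₁ t * F t) t

namespace SolvesChartK1On

variable {x₁ r₁ ε₁ l₁ F : ℝ → ℝ} {a b δ : ℝ}

theorem monotoneOn_ε₁ (h : SolvesChartK1On x₁ r₁ ε₁ l₁ F (Icc a b))
    (hF : ∀ s ∈ Icc a b, F s ≤ 0) : MonotoneOn ε₁ (Icc a b) :=
  monotoneOn_Icc_of_hasDerivAt_nonneg h.hasDerivAt_ε₁ fun s hs =>
    mul_nonneg_of_nonpos_of_nonpos (neg_nonpos.2 (sq_nonneg _)) (hF s (Ioo_subset_Icc_self hs))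

theorem strictMonoOn_ε₁ (h : SolvesChartK1On x₁ r₁ ε₁ l₁ F (Icc a b))
    (hF : ∀ s ∈ Icc a b, F s < 0) (hε : 0 < ε₁ a) : StrictMonoOn ε₁ (Icc a b) := by
  have hmono := h.monotoneOn_ε₁ fun s hs => (hF s hs).le
  refine strictMonoOn_Icc_of_hasDerivAt_pos h.hasDerivAt_ε₁ fun s hs => ?_
  have hs' := Ioo_subset_Icc_self hs
  have hεs : 0 < ε₁ s := hε.trans_le (hmono (left_mem_Icc.2 (hs'.1.trans hs'.2)) hs' hs'.1)
  exact mul_pos_of_neg_of_neg (neg_neg_of_pos (pow_pos hεs 2)) (hF s hs')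

theorem vectorField_x₁_le (h : SolvesChartK1On x₁ r₁ ε₁ l₁ F (Icc a b)) (hδ : 0 ≤ δ)
    (hF : ∀ s ∈ Icc a b, F s ≤ -δ) (hx : MapsTo x₁ (Icc a b) (Iic (x₁ a))) (hxa : x₁ a < 0)
    (hε : 0 ≤ ε₁ a) : ∀ s ∈ Icc a b, -(1 / 2) * ε₁ s * x₁ s * F s ≤ ε₁ a * x₁ a * δ / 2 := by
  intro s hs
  have hεs : ε₁ a ≤ ε₁ s := h.monotoneOn_ε₁ (fun s hs => (hF s hs).trans (neg_nonpos.2 hδ))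
    (left_mem_Icc.2 (hs.1.trans hs.2)) hs hs.1
  have hxF : -x₁ a * δ ≤ x₁ s * F s := by
    simpa only [neg_mul_neg] using mul_le_mul (neg_le_neg (hx hs)) (le_neg.2 (hF s hs)) hδ
      (neg_nonneg.2 ((hx hs).trans hxa.le))
  have := mul_le_mul hεs hxF (mul_nonneg (neg_nonneg.2 hxa.le) hδ) (hε.trans hεs)
  linarith

theorem x₁_sub_le (h : SolvesChartK1On x₁ r₁ ε₁ l₁ F (Icc a b)) (hδ : 0 ≤ δ)
    (hF : ∀ s ∈ Icc a b, F s ≤ -δ) (hx : MapsTo x₁ (Icc a b) (Iic (x₁ a))) (hxa : x₁ a < 0)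
    (hε : 0 ≤ ε₁ a) (hab : a ≤ b) : x₁ b - x₁ a ≤ ε₁ a * x₁ a * δ / 2 * (b - a) :=
  sub_le_mul_sub_of_hasDerivAt_le h.hasDerivAt_x₁
    (fun s hs => h.vectorField_x₁_le hδ hF hx hxa hε s (Ioo_subset_Icc_self hs)) hab

theorem strictAntiOn_x₁ (h : SolvesChartK1On x₁ r₁ ε₁ l₁ F (Icc a b)) (hδ : 0 < δ)
    (hF : ∀ s ∈ Icc a b, F s ≤ -δ) (hx : MapsTo x₁ (Icc a b) (Iic (x₁ a))) (hxa : x₁ a < 0)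
    (hε : 0 < ε₁ a) : StrictAntiOn x₁ (Icc a b) :=
  strictAntiOn_Icc_of_hasDerivAt_neg h.hasDerivAt_x₁ fun s hs =>
    (h.vectorField_x₁_le hδ.le hF hx hxa hε.le s (Ioo_subset_Icc_self hs)).trans_lt
      (by nlinarith [mul_pos hε hδ])

theorem r₁_mul_x₁_eq (h : SolvesChartK1On x₁ r₁ ε₁ l₁ F (Icc a b)) (hab : a ≤ b) :
    r₁ b * x₁ b = r₁ a * x₁ a :=
  eq_of_hasDerivAt_eq_zero (f := r₁ * x₁) (fun s hs =>
    ((h.hasDerivAt_r₁ s hs).mul (h.hasDerivAt_x₁ s hs)).congr_deriv (by ring)) hab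

theorem r₁_sq_mul_ε₁_eq (h : SolvesChartK1On x₁ r₁ ε₁ l₁ F (Icc a b)) (hab : a ≤ b) :
    r₁ b ^ 2 * ε₁ b = r₁ a ^ 2 * ε₁ a :=
  eq_of_hasDerivAt_eq_zero (f := r₁ ^ 2 * ε₁) (fun s hs =>
    (((h.hasDerivAt_r₁ s hs).pow 2).mul (h.hasDerivAt_ε₁ s hs)).congr_deriv
      (by rw [Pi.pow_apply]; ring)) hab

theorem r₁_mul_l₁_eq (h : SolvesChartK1On x₁ r₁ ε₁ l₁ F (Icc a b)) (hab : a ≤ b) :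
    r₁ b * l₁ b = r₁ a * l₁ a :=
  eq_of_hasDerivAt_eq_zero (f := r₁ * l₁) (fun s hs =>
    ((h.hasDerivAt_r₁ s hs).mul (h.hasDerivAt_l₁ s hs)).congr_deriv (by ring)) hab

end SolvesChartK1On

theorem chartK1_left_region_reaches_attracting_branch_general
    (δ : ℝ) (hδ : 0 < δ) (x₁ r₁ ε₁ l₁ F : ℝ → ℝ)
    (hdiff : ∀ t : ℝ, 0 ≤ t → DifferentiableAt ℝ x₁ t ∧ DifferentiableAt ℝ r₁ t ∧
      DifferentiableAt ℝ ε₁ t ∧ DifferentiableAt ℝ l₁ t)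
    (hFneg : ∀ t : ℝ, 0 ≤ t → F t ≤ -δ)
    (hx : ∀ t : ℝ, 0 ≤ t → x₁ t ∈ Set.Icc (-1 : ℝ) 0 →
      HasDerivAt x₁ (-(1 / 2) * ε₁ t * x₁ t * F t) t)
    (hr : ∀ t : ℝ, 0 ≤ t → x₁ t ∈ Set.Icc (-1 : ℝ) 0 →
      HasDerivAt r₁ ((1 / 2) * r₁ t * ε₁ t * F t) t)
    (he : ∀ t : ℝ, 0 ≤ t → x₁ t ∈ Set.Icc (-1 : ℝ) 0 →
      HasDerivAt ε₁ (-(ε₁ t) ^ 2 * F t) t)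
    (hl : ∀ t : ℝ, 0 ≤ t → x₁ t ∈ Set.Icc (-1 : ℝ) 0 →
      HasDerivAt l₁ (-(1 / 2) * l₁ t * ε₁ t * F t) t)
    (hx0 : x₁ 0 ∈ Set.Ico (-1 : ℝ) 0) (hr0 : 0 < r₁ 0) (he0 : 0 < ε₁ 0) :
    ∃ t' : ℝ, 0 ≤ t' ∧ x₁ t' = -1 ∧ (∀ s ∈ Set.Ico (0 : ℝ) t', x₁ s ≠ -1) ∧
      StrictAntiOn x₁ (Set.Icc 0 t') ∧
      (∀ s ∈ Set.Icc (0 : ℝ) t', x₁ s ∈ Set.Icc (-1 : ℝ) (x₁ 0)) ∧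
      StrictMonoOn ε₁ (Set.Icc 0 t') ∧
      r₁ t' = -(x₁ 0) * r₁ 0 ∧
      ε₁ t' = ε₁ 0 / (x₁ 0) ^ 2 ∧
      l₁ t' = -(l₁ 0) / x₁ 0 := by
  obtain ⟨hx0l, hx0r⟩ := hx0
  have hsol (t : ℝ) (ht : MapsTo x₁ (Icc 0 t) (Icc (-1) (x₁ 0))) :
      SolvesChartK1On x₁ r₁ ε₁ l₁ F (Icc 0 t) := by
    have hK (s : ℝ) (hs : s ∈ Icc 0 t) := Icc_subset_Icc_right hx0r.le (ht hs)
    exact ⟨fun s hs => hx s hs.1 (hK s hs), fun s hs => hr s hs.1 (hK s hs),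
      fun s hs => he s hs.1 (hK s hs), fun s hs => hl s hs.1 (hK s hs)⟩
  have hF (t : ℝ) : ∀ s ∈ Icc 0 t, F s ≤ -δ := fun s hs => hFneg s hs.1
  have hm : ε₁ 0 * x₁ 0 * δ / 2 < 0 := by nlinarith [mul_pos he0 hδ]
  obtain ⟨T, hT0, hTK, hxT⟩ := exists_mapsTo_Icc_eq_left
    (fun t ht => (hdiff t ht).1.continuousAt) ⟨hx0l, le_rfl⟩ hm
    (fun t ht0 ht => (hsol t ht).x₁_sub_le hδ.le (hF t) (fun s hs => (ht hs).2) hx0r he0.le ht0)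
    (fun t ht0 ht => ⟨_, ((hsol t ht).vectorField_x₁_le hδ.le (hF t) (fun s hs => (ht hs).2) hx0r
      he0.le t ⟨ht0, le_rfl⟩).trans_lt hm, (hsol t ht).hasDerivAt_x₁ t ⟨ht0, le_rfl⟩⟩)
  have hsolT := hsol T hTK
  have hanti := hsolT.strictAntiOn_x₁ hδ (hF T) (fun s hs => (hTK hs).2) hx0r he0
  have hrT : r₁ T = -x₁ 0 * r₁ 0 := by
    linear_combination r₁ T * hxT - hsolT.r₁_mul_x₁_eq hT0
  refine ⟨T, hT0, hxT, fun s hs => (hxT ▸ hanti ⟨hs.1, hs.2.le⟩ ⟨hT0, le_rfl⟩ hs.2).ne',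
    hanti, fun s hs => hTK hs,
    hsolT.strictMonoOn_ε₁ (fun s hs => (hF T s hs).trans_lt (neg_neg_of_pos hδ)) he0, hrT, ?_, ?_⟩
  · rw [eq_div_iff (pow_ne_zero 2 hx0r.ne)]
    refine mul_left_cancel₀ (pow_ne_zero 2 hr0.ne') ?_
    linear_combination hsolT.r₁_sq_mul_ε₁_eq hT0 - (r₁ T - x₁ 0 * r₁ 0) * ε₁ T * hrT
  · rw [eq_div_iff hx0r.ne]
    refine mul_left_cancel₀ hr0.ne' ?_
    linear_combination l₁ T * hrT - hsolT.r₁_mul_l₁_eq hT0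

/-- In chart `K₁`, a trajectory of the desingularized canard
system starting in the blown-up critical manifold to the left of the zero set
of `F` (i.e. with `F ≤ -δ < 0` along the solution, `x₁ 0 ∈ [-1,0)`,
`r₁ 0 > 0`, `ε₁ 0 > 0`) reaches the attracting boundary `{x₁ = -1}` at a first
time `t̃ ≥ 0`; on `[0, t̃]` the function `x₁` is strictly decreasing (staying in
`[-1, x₁ 0]`) and `ε₁` is strictly increasing, and the exit values are
determined by the conserved quantities: `r₁ t̃ = -(x₁ 0) (r₁ 0)`,
`ε₁ t̃ = ε₁ 0 / (x₁ 0)²`, `λ₁ t̃ = -(λ₁ 0) / (x₁ 0)`. -/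
theorem chartK1_left_region_reaches_attracting_branch
    (δ : ℝ) (hδ : 0 < δ) (x₁ r₁ ε₁ l₁ F : ℝ → ℝ)
    (hdiff : ∀ t : ℝ, 0 ≤ t → DifferentiableAt ℝ x₁ t ∧ DifferentiableAt ℝ r₁ t ∧
      DifferentiableAt ℝ ε₁ t ∧ DifferentiableAt ℝ l₁ t)
    (hFcont : Continuous F) (hFneg : ∀ t : ℝ, 0 ≤ t → F t ≤ -δ)
    (hx : ∀ t : ℝ, 0 ≤ t → x₁ t ∈ Set.Icc (-1 : ℝ) 0 →
      HasDerivAt x₁ (-(1 / 2) * ε₁ t * x₁ t * F t) t)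
    (hr : ∀ t : ℝ, 0 ≤ t → x₁ t ∈ Set.Icc (-1 : ℝ) 0 →
      HasDerivAt r₁ ((1 / 2) * r₁ t * ε₁ t * F t) t)
    (he : ∀ t : ℝ, 0 ≤ t → x₁ t ∈ Set.Icc (-1 : ℝ) 0 →
      HasDerivAt ε₁ (-(ε₁ t) ^ 2 * F t) t)
    (hl : ∀ t : ℝ, 0 ≤ t → x₁ t ∈ Set.Icc (-1 : ℝ) 0 →
      HasDerivAt l₁ (-(1 / 2) * l₁ t * ε₁ t * F t) t)
    (hx0 : x₁ 0 ∈ Set.Ico (-1 : ℝ) 0) (hr0 : 0 < r₁ 0) (he0 : 0 < ε₁ 0) :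
    ∃ t' : ℝ, 0 ≤ t' ∧ x₁ t' = -1 ∧ (∀ s ∈ Set.Ico (0 : ℝ) t', x₁ s ≠ -1) ∧
      StrictAntiOn x₁ (Set.Icc 0 t') ∧
      (∀ s ∈ Set.Icc (0 : ℝ) t', x₁ s ∈ Set.Icc (-1 : ℝ) (x₁ 0)) ∧
      StrictMonoOn ε₁ (Set.Icc 0 t') ∧
      r₁ t' = -(x₁ 0) * r₁ 0 ∧
      ε₁ t' = ε₁ 0 / (x₁ 0) ^ 2 ∧
      l₁ t' = -(l₁ 0) / x₁ 0 :=
  chartK1_left_region_reaches_attracting_branch_general δ hδ x₁ r₁ ε₁ l₁ F hdiff hFneg hx hr he hl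
    hx0 hr0 he0
end

section
/- Let δ > 0, ρ > 0, and let x₁, r₁, ε₁, λ₁ : [0,∞) → ℝ be differentiable and F : [0,∞) → ℝ be continuous with F(t) ≥ δ for all t. Suppose that at every time t with x₁(t) ∈ (0, 1] and r₁(t) ∈ (0, ρ], the equations x₁' = −(1/2)ε₁x₁F, r₁' = (1/2)r₁ε₁F, ε₁' = −ε₁²F, λ₁' = −(1/2)λ₁ε₁F hold, and assume x₁(0) ∈ (0, 1], r₁(0) ∈ (0, ρ), ε₁(0) > 0. Then there exists a smallest time t̂ > 0 with r₁(t̂) = ρ; on [0, t̂] the function r₁ is strictly increasing and x₁ is strictly decreasing with x₁(t) = r₁(0)x₁(0)/r₁(t) > 0; and at the exit time x₁(t̂) = r₁(0)x₁(0)/ρ, ε₁(t̂) = r₁(0)²ε₁(0)/ρ² and λ₁(t̂) = r₁(0)λ₁(0)/ρ. (This is the statement that trajectories starting in the blown-up critical manifold to the right of the zero set of F leave the chart domain through {r₁ = ρ} in finite time, with exit values determined by the conserved quantities x = r₁x₁, ε = r₁²ε₁, λ = r₁λ₁.) -/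
open Set Filter Topology

/-!
Along the flow the blow-down quantities `x = r₁x₁`, `ε = r₁²ε₁` and `λ = r₁λ₁` are conserved.
Hence, as long as the solution stays in the region `x₁ ∈ (0,1]`, `r₁ ∈ (0,ρ]`, we have
`ε₁ = r₁(0)²ε₁(0)/r₁² > 0` and `r₁' = r₁(0)²ε₁(0)F/(2r₁) ≥ r₁(0)²ε₁(0)δ/(2ρ)`, so `r₁` grows at
least linearly, while `x₁ = r₁(0)x₁(0)/r₁` decreases and stays above `r₁(0)x₁(0)/ρ > 0`.
The solution can therefore leave the region only through `{r₁ = ρ}`, and it must do so in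
finite time: the exit time is the supremum of the times up to which it stays in the region.
-/

theorem mul_eq_of_hasDerivAt_opposite_rates {f g a : ℝ → ℝ} {t₀ T : ℝ}
    (hf : ∀ t ∈ Icc t₀ T, HasDerivAt f (a t * f t) t)
    (hg : ∀ t ∈ Icc t₀ T, HasDerivAt g (-a t * g t) t) :
    ∀ t ∈ Icc t₀ T, f t * g t = f t₀ * g t₀ :=
  constant_of_has_deriv_right_zero (f := fun t => f t * g t)
    (fun t ht => ((hf t ht).continuousAt.mul (hg t ht).continuousAt).continuousWithinAt)
    fun t ht => (((hf t (Ico_subset_Icc_self ht)).mul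
      (hg t (Ico_subset_Icc_self ht))).congr_deriv (by ring)).hasDerivWithinAt

theorem HasDerivAt.eventually_nhdsGT_lt_s15 {f : ℝ → ℝ} {f' a : ℝ} (hf : HasDerivAt f f' a)
    (hf' : f' < 0) : ∀ᶠ t in 𝓝[>] a, f t < f a := by
  filter_upwards [((hasDerivAt_iff_tendsto_slope.1 hf).eventually
    (eventually_lt_nhds hf')).filter_mono (nhdsGT_le_nhdsNE a), self_mem_nhdsWithin]
    with t hslope (ht : a < t)
  rw [slope_def_field, div_lt_iff₀ (sub_pos.2 ht)] at hslope
  linarith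

theorem ContinuousAt.mem_of_forall_Ico_mem {X : Type*} [TopologicalSpace X] {f : ℝ → X}
    {C : Set X} {a b : ℝ} (hf : ContinuousAt f b) (hC : IsClosed C) (hab : a < b)
    (h : ∀ s ∈ Ico a b, f s ∈ C) : f b ∈ C :=
  hC.mem_of_tendsto (hf.tendsto.mono_left nhdsWithin_le_nhds)
    (mem_of_superset (Ico_mem_nhdsLT hab) h)

structure IsChartK1Solution (ρ : ℝ) (x₁ r₁ ε₁ l₁ F : ℝ → ℝ) : Prop where
  hasDerivAt_x : ∀ t : ℝ, 0 ≤ t → x₁ t ∈ Ioc (0 : ℝ) 1 → r₁ t ∈ Ioc (0 : ℝ) ρ →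
    HasDerivAt x₁ (-(1 / 2) * ε₁ t * x₁ t * F t) t
  hasDerivAt_r : ∀ t : ℝ, 0 ≤ t → x₁ t ∈ Ioc (0 : ℝ) 1 → r₁ t ∈ Ioc (0 : ℝ) ρ →
    HasDerivAt r₁ ((1 / 2) * r₁ t * ε₁ t * F t) t
  hasDerivAt_ε : ∀ t : ℝ, 0 ≤ t → x₁ t ∈ Ioc (0 : ℝ) 1 → r₁ t ∈ Ioc (0 : ℝ) ρ →
    HasDerivAt ε₁ (-(ε₁ t) ^ 2 * F t) t
  hasDerivAt_l : ∀ t : ℝ, 0 ≤ t → x₁ t ∈ Ioc (0 : ℝ) 1 → r₁ t ∈ Ioc (0 : ℝ) ρ →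
    HasDerivAt l₁ (-(1 / 2) * l₁ t * ε₁ t * F t) t

def StaysInChartUntil (ρ : ℝ) (x₁ r₁ : ℝ → ℝ) (T : ℝ) : Prop :=
  0 ≤ T ∧ ∀ s ∈ Icc 0 T, x₁ s ∈ Ioc 0 1 ∧ r₁ s ∈ Ioc 0 ρ

namespace StaysInChartUntil

variable {δ ρ T : ℝ} {x₁ r₁ ε₁ l₁ F : ℝ → ℝ}

theorem mono (h : StaysInChartUntil ρ x₁ r₁ T) {s : ℝ} (hs : s ∈ Icc 0 T) :
    StaysInChartUntil ρ x₁ r₁ s :=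
  ⟨hs.1, fun u hu => h.2 u ⟨hu.1, hu.2.trans hs.2⟩⟩

theorem conserved (h : StaysInChartUntil ρ x₁ r₁ T) (hsol : IsChartK1Solution ρ x₁ r₁ ε₁ l₁ F) :
    ∀ s ∈ Icc 0 T, r₁ s * x₁ s = r₁ 0 * x₁ 0 ∧ r₁ s ^ 2 * ε₁ s = r₁ 0 ^ 2 * ε₁ 0 ∧
      r₁ s * l₁ s = r₁ 0 * l₁ 0 := by
  have hr : ∀ s ∈ Icc 0 T, HasDerivAt r₁ ((1 / 2) * ε₁ s * F s * r₁ s) s := fun s hs =>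
    (hsol.hasDerivAt_r s hs.1 (h.2 s hs).1 (h.2 s hs).2).congr_deriv (by ring)
  have hr_sq : ∀ s ∈ Icc 0 T, HasDerivAt (fun t => r₁ t ^ 2) (ε₁ s * F s * r₁ s ^ 2) s :=
    fun s hs => ((hr s hs).pow 2).congr_deriv (by ring)
  have hx : ∀ s ∈ Icc 0 T, HasDerivAt x₁ (-((1 / 2) * ε₁ s * F s) * x₁ s) s := fun s hs =>
    (hsol.hasDerivAt_x s hs.1 (h.2 s hs).1 (h.2 s hs).2).congr_deriv (by ring)
  have he : ∀ s ∈ Icc 0 T, HasDerivAt ε₁ (-(ε₁ s * F s) * ε₁ s) s := fun s hs =>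
    (hsol.hasDerivAt_ε s hs.1 (h.2 s hs).1 (h.2 s hs).2).congr_deriv (by ring)
  have hl : ∀ s ∈ Icc 0 T, HasDerivAt l₁ (-((1 / 2) * ε₁ s * F s) * l₁ s) s := fun s hs =>
    (hsol.hasDerivAt_l s hs.1 (h.2 s hs).1 (h.2 s hs).2).congr_deriv (by ring)
  exact fun s hs => ⟨mul_eq_of_hasDerivAt_opposite_rates hr hx s hs,
    mul_eq_of_hasDerivAt_opposite_rates hr_sq he s hs,
    mul_eq_of_hasDerivAt_opposite_rates hr hl s hs⟩

theorem ε_pos (h : StaysInChartUntil ρ x₁ r₁ T) (hsol : IsChartK1Solution ρ x₁ r₁ ε₁ l₁ F)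
    (he0 : 0 < ε₁ 0) : ∀ s ∈ Icc 0 T, 0 < ε₁ s := by
  intro s hs
  have hr0 : 0 < r₁ 0 := (h.2 0 ⟨le_rfl, h.1⟩).2.1
  have hrs : 0 < r₁ s := (h.2 s hs).2.1
  have hK : 0 < r₁ s ^ 2 * ε₁ s := by rw [(h.conserved hsol s hs).2.1]; positivity
  exact pos_of_mul_pos_right hK (by positivity)

theorem mul_sub_le_r_sub (h : StaysInChartUntil ρ x₁ r₁ T)
    (hsol : IsChartK1Solution ρ x₁ r₁ ε₁ l₁ F) (he0 : 0 ≤ ε₁ 0) (hδ : 0 ≤ δ)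
    (hF : ∀ t, 0 ≤ t → δ ≤ F t) :
    ∀ s ∈ Icc 0 T, ∀ t ∈ Icc 0 T, s ≤ t →
      r₁ 0 ^ 2 * ε₁ 0 * δ / (2 * ρ) * (t - s) ≤ r₁ t - r₁ s := by
  have hr : ∀ s ∈ Icc 0 T, HasDerivAt r₁ ((1 / 2) * r₁ s * ε₁ s * F s) s := fun s hs =>
    hsol.hasDerivAt_r s hs.1 (h.2 s hs).1 (h.2 s hs).2
  refine (convex_Icc 0 T).mul_sub_le_image_sub_of_le_deriv
    (fun s hs => (hr s hs).continuousAt.continuousWithinAt)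
    (fun s hs => (hr s (interior_subset hs)).differentiableAt.differentiableWithinAt)
    fun s hs => ?_
  have hs : s ∈ Icc 0 T := interior_subset hs
  obtain ⟨hrs, hrsρ⟩ := (h.2 s hs).2
  have hK : r₁ 0 ^ 2 * ε₁ 0 = r₁ s ^ 2 * ε₁ s := (h.conserved hsol s hs).2.1.symm
  have hrate : (1 / 2) * r₁ s * ε₁ s * F s = r₁ 0 ^ 2 * ε₁ 0 * F s / (2 * r₁ s) := by
    rw [hK]; field_simp
  rw [(hr s hs).deriv, hrate]
  have hFs := hF s hs.1
  gcongr
  exact mul_nonneg (by positivity) (hδ.trans hFs)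

theorem strictMonoOn_r (h : StaysInChartUntil ρ x₁ r₁ T)
    (hsol : IsChartK1Solution ρ x₁ r₁ ε₁ l₁ F) (he0 : 0 < ε₁ 0) (hδ : 0 < δ)
    (hF : ∀ t, 0 ≤ t → δ ≤ F t) : StrictMonoOn r₁ (Icc 0 T) := by
  intro s hs t ht hst
  obtain ⟨hr0, hr0ρ⟩ := (h.2 0 ⟨le_rfl, h.1⟩).2
  have hc : 0 < r₁ 0 ^ 2 * ε₁ 0 * δ / (2 * ρ) * (t - s) :=
    mul_pos (div_pos (by positivity) (by linarith)) (sub_pos.2 hst)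
  linarith [h.mul_sub_le_r_sub hsol he0.le hδ.le hF s hs t ht hst.le]

theorem x_eq (h : StaysInChartUntil ρ x₁ r₁ T) (hsol : IsChartK1Solution ρ x₁ r₁ ε₁ l₁ F) :
    ∀ s ∈ Icc 0 T, x₁ s = r₁ 0 * x₁ 0 / r₁ s := fun s hs => by
  rw [eq_div_iff (h.2 s hs).2.1.ne', mul_comm]
  exact (h.conserved hsol s hs).1

theorem strictAntiOn_x (h : StaysInChartUntil ρ x₁ r₁ T)
    (hsol : IsChartK1Solution ρ x₁ r₁ ε₁ l₁ F) (he0 : 0 < ε₁ 0) (hδ : 0 < δ)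
    (hF : ∀ t, 0 ≤ t → δ ≤ F t) : StrictAntiOn x₁ (Icc 0 T) := by
  intro s hs t ht hst
  obtain ⟨⟨hx0, -⟩, hr0, -⟩ := h.2 0 ⟨le_rfl, h.1⟩
  rw [h.x_eq hsol s hs, h.x_eq hsol t ht]
  exact div_lt_div_of_pos_left (by positivity) (h.2 s hs).2.1
    (h.strictMonoOn_r hsol he0 hδ hF hs ht hst)

theorem r_mem_Icc (h : StaysInChartUntil ρ x₁ r₁ T)
    (hsol : IsChartK1Solution ρ x₁ r₁ ε₁ l₁ F) (he0 : 0 < ε₁ 0) (hδ : 0 < δ)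
    (hF : ∀ t, 0 ≤ t → δ ≤ F t) : r₁ T ∈ Icc (r₁ 0) ρ :=
  ⟨(h.strictMonoOn_r hsol he0 hδ hF).monotoneOn ⟨le_rfl, h.1⟩ ⟨h.1, le_rfl⟩ h.1,
    (h.2 T ⟨h.1, le_rfl⟩).2.2⟩

theorem x_mem_Icc (h : StaysInChartUntil ρ x₁ r₁ T)
    (hsol : IsChartK1Solution ρ x₁ r₁ ε₁ l₁ F) (he0 : 0 < ε₁ 0) (hδ : 0 < δ)
    (hF : ∀ t, 0 ≤ t → δ ≤ F t) : x₁ T ∈ Icc (r₁ 0 * x₁ 0 / ρ) 1 := by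
  obtain ⟨⟨hx0, hx01⟩, hr0, -⟩ := h.2 0 ⟨le_rfl, h.1⟩
  obtain ⟨hrT, hrTρ⟩ := (h.2 T ⟨h.1, le_rfl⟩).2
  refine ⟨?_, le_trans ?_ hx01⟩
  · rw [h.x_eq hsol T ⟨h.1, le_rfl⟩]
    exact div_le_div_of_nonneg_left (by positivity) hrT hrTρ
  · exact (h.strictAntiOn_x hsol he0 hδ hF).antitoneOn ⟨le_rfl, h.1⟩ ⟨h.1, le_rfl⟩ h.1

theorem exists_gt (h : StaysInChartUntil ρ x₁ r₁ T) (hsol : IsChartK1Solution ρ x₁ r₁ ε₁ l₁ F)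
    (he0 : 0 < ε₁ 0) (hFT : 0 < F T) (hrT : r₁ T < ρ) :
    ∃ T' > T, StaysInChartUntil ρ x₁ r₁ T' := by
  have hT : T ∈ Icc 0 T := ⟨h.1, le_rfl⟩
  obtain ⟨⟨hxT, hxT1⟩, hrT0, -⟩ := h.2 T hT
  have hx' := hsol.hasDerivAt_x T h.1 ⟨hxT, hxT1⟩ ⟨hrT0, hrT.le⟩
  have hr' := hsol.hasDerivAt_r T h.1 ⟨hxT, hxT1⟩ ⟨hrT0, hrT.le⟩
  -- `x₁` strictly decreases through `T`, so it stays `≤ 1` even when `x₁ T = 1`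
  have hdec : ∀ᶠ t in 𝓝[>] T, x₁ t < x₁ T := by
    refine hx'.eventually_nhdsGT_lt_s15 ?_
    have := mul_pos (mul_pos (h.ε_pos hsol he0 T hT) hxT) hFT
    linarith
  have hopen : ∀ᶠ t in 𝓝 T, 0 < x₁ t ∧ r₁ t ∈ Ioo 0 ρ :=
    (hx'.continuousAt.eventually (lt_mem_nhds hxT)).and
      (hr'.continuousAt.eventually (Ioo_mem_nhds hrT0 hrT))
  obtain ⟨u, hu, hsub⟩ :=
    mem_nhdsGT_iff_exists_Ioc_subset.1 (hdec.and (nhdsWithin_le_nhds hopen))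
  refine ⟨u, hu, h.1.trans hu.le, fun s hs => ?_⟩
  rcases le_or_gt s T with hsT | hTs
  · exact h.2 s ⟨hs.1, hsT⟩
  · obtain ⟨hlt, hxs, hrs⟩ := hsub ⟨hTs, hs.2⟩
    exact ⟨⟨hxs, hlt.le.trans hxT1⟩, hrs.1, hrs.2.le⟩

theorem of_forall_lt (hsol : IsChartK1Solution ρ x₁ r₁ ε₁ l₁ F) (he0 : 0 < ε₁ 0) (hδ : 0 < δ)
    (hF : ∀ t, 0 ≤ t → δ ≤ F t) (hxc : ContinuousAt x₁ T) (hrc : ContinuousAt r₁ T)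
    (hT : 0 < T) (h : ∀ s ∈ Ico 0 T, StaysInChartUntil ρ x₁ r₁ s) :
    StaysInChartUntil ρ x₁ r₁ T := by
  have hr := hrc.mem_of_forall_Ico_mem isClosed_Icc hT fun s hs =>
    (h s hs).r_mem_Icc hsol he0 hδ hF
  have hx := hxc.mem_of_forall_Ico_mem isClosed_Icc hT fun s hs =>
    (h s hs).x_mem_Icc hsol he0 hδ hF
  obtain ⟨⟨hx0, -⟩, hr0, -⟩ := (h 0 ⟨le_rfl, hT⟩).2 0 ⟨le_rfl, le_rfl⟩
  have hρ : 0 < ρ := hr0.trans_le (hr.1.trans hr.2)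
  refine ⟨hT.le, fun s hs => ?_⟩
  rcases hs.2.lt_or_eq with hsT | rfl
  · exact (h s ⟨hs.1, hsT⟩).2 s ⟨hs.1, le_rfl⟩
  · exact ⟨⟨(by positivity : 0 < r₁ 0 * x₁ 0 / ρ).trans_le hx.1, hx.2⟩,
      hr0.trans_le hr.1, hr.2⟩

theorem exists_r_eq (h0 : StaysInChartUntil ρ x₁ r₁ 0)
    (hsol : IsChartK1Solution ρ x₁ r₁ ε₁ l₁ F) (he0 : 0 < ε₁ 0) (hδ : 0 < δ)
    (hF : ∀ t, 0 ≤ t → δ ≤ F t) (hxc : ∀ t, 0 ≤ t → ContinuousAt x₁ t)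
    (hrc : ∀ t, 0 ≤ t → ContinuousAt r₁ t) (hr0 : r₁ 0 < ρ) :
    ∃ T, StaysInChartUntil ρ x₁ r₁ T ∧ r₁ T = ρ := by
  set S := {T | StaysInChartUntil ρ x₁ r₁ T}
  set c := r₁ 0 ^ 2 * ε₁ 0 * δ / (2 * ρ)
  have hc : 0 < c := by
    have hr0pos := (h0.2 0 ⟨le_rfl, le_rfl⟩).2.1
    exact div_pos (by positivity) (by linarith)
  have hbdd : BddAbove S := ⟨(ρ - r₁ 0) / c, fun T hT => by
    have := hT.mul_sub_le_r_sub hsol he0.le hδ.le hF 0 ⟨le_rfl, hT.1⟩ T ⟨hT.1, le_rfl⟩ hT.1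
    rw [le_div_iff₀ hc]
    linarith [(hT.2 T ⟨hT.1, le_rfl⟩).2.2]⟩
  obtain ⟨η, hη, hηS⟩ := h0.exists_gt hsol he0 (hδ.trans_le (hF 0 le_rfl)) hr0
  have hT₀ : 0 < sSup S := hη.trans_le (le_csSup hbdd hηS)
  have hT₀S : StaysInChartUntil ρ x₁ r₁ (sSup S) :=
    of_forall_lt hsol he0 hδ hF (hxc _ hT₀.le) (hrc _ hT₀.le) hT₀ fun s hs => by
      obtain ⟨u, huS, hsu⟩ := exists_lt_of_lt_csSup ⟨0, h0⟩ hs.2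
      exact huS.mono ⟨hs.1, hsu.le⟩
  refine ⟨sSup S, hT₀S, ?_⟩
  by_contra hne
  obtain ⟨T', hT', hT'S⟩ := hT₀S.exists_gt hsol he0 (hδ.trans_le (hF _ hT₀.le))
    ((hT₀S.2 _ ⟨hT₀.le, le_rfl⟩).2.2.lt_of_ne hne)
  exact (le_csSup hbdd hT'S).not_gt hT'

end StaysInChartUntil

theorem chartK1_right_region_exits_chart_general
    (δ ρ : ℝ) (hδ : 0 < δ) (x₁ r₁ ε₁ l₁ F : ℝ → ℝ)
    (hdiff : ∀ t : ℝ, 0 ≤ t → DifferentiableAt ℝ x₁ t ∧ DifferentiableAt ℝ r₁ t ∧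
      DifferentiableAt ℝ ε₁ t ∧ DifferentiableAt ℝ l₁ t)
    (hFpos : ∀ t : ℝ, 0 ≤ t → δ ≤ F t)
    (hx : ∀ t : ℝ, 0 ≤ t → x₁ t ∈ Set.Ioc (0 : ℝ) 1 → r₁ t ∈ Set.Ioc (0 : ℝ) ρ →
      HasDerivAt x₁ (-(1 / 2) * ε₁ t * x₁ t * F t) t)
    (hr : ∀ t : ℝ, 0 ≤ t → x₁ t ∈ Set.Ioc (0 : ℝ) 1 → r₁ t ∈ Set.Ioc (0 : ℝ) ρ →
      HasDerivAt r₁ ((1 / 2) * r₁ t * ε₁ t * F t) t)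
    (he : ∀ t : ℝ, 0 ≤ t → x₁ t ∈ Set.Ioc (0 : ℝ) 1 → r₁ t ∈ Set.Ioc (0 : ℝ) ρ →
      HasDerivAt ε₁ (-(ε₁ t) ^ 2 * F t) t)
    (hl : ∀ t : ℝ, 0 ≤ t → x₁ t ∈ Set.Ioc (0 : ℝ) 1 → r₁ t ∈ Set.Ioc (0 : ℝ) ρ →
      HasDerivAt l₁ (-(1 / 2) * l₁ t * ε₁ t * F t) t)
    (hx0 : x₁ 0 ∈ Set.Ioc (0 : ℝ) 1) (hr0 : r₁ 0 ∈ Set.Ioo (0 : ℝ) ρ)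
    (he0 : 0 < ε₁ 0) :
    ∃ t' : ℝ, 0 < t' ∧ r₁ t' = ρ ∧ (∀ s ∈ Set.Ico (0 : ℝ) t', r₁ s ≠ ρ) ∧
      StrictMonoOn r₁ (Set.Icc 0 t') ∧
      StrictAntiOn x₁ (Set.Icc 0 t') ∧
      (∀ s ∈ Set.Icc (0 : ℝ) t', x₁ s = r₁ 0 * x₁ 0 / r₁ s ∧ 0 < x₁ s) ∧
      x₁ t' = r₁ 0 * x₁ 0 / ρ ∧
      ε₁ t' = (r₁ 0) ^ 2 * ε₁ 0 / ρ ^ 2 ∧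
      l₁ t' = r₁ 0 * l₁ 0 / ρ := by
  have hsol : IsChartK1Solution ρ x₁ r₁ ε₁ l₁ F := ⟨hx, hr, he, hl⟩
  have h0 : StaysInChartUntil ρ x₁ r₁ 0 := ⟨le_rfl, fun s hs => by
    rw [le_antisymm hs.2 hs.1]
    exact ⟨hx0, hr0.1, hr0.2.le⟩⟩
  obtain ⟨T, hT, hrT⟩ := h0.exists_r_eq hsol he0 hδ hFpos
    (fun t ht => (hdiff t ht).1.continuousAt) (fun t ht => (hdiff t ht).2.1.continuousAt) hr0.2
  have hTpos : 0 < T := hT.1.lt_of_ne (by rintro rfl; exact hr0.2.ne hrT)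
  have hmono := hT.strictMonoOn_r hsol he0 hδ hFpos
  have hTT : T ∈ Icc 0 T := ⟨hT.1, le_rfl⟩
  have hrT_pos : 0 < r₁ T := (hT.2 T hTT).2.1
  obtain ⟨-, hεT, hlT⟩ := hT.conserved hsol T hTT
  refine ⟨T, hTpos, hrT, fun s hs => ?_, hmono, hT.strictAntiOn_x hsol he0 hδ hFpos,
    fun s hs => ⟨hT.x_eq hsol s hs, (hT.2 s hs).1.1⟩, hrT ▸ hT.x_eq hsol T hTT, ?_, ?_⟩
  · exact (hrT ▸ hmono ⟨hs.1, hs.2.le⟩ hTT hs.2).ne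
  · rw [← hrT, eq_div_iff (pow_pos hrT_pos 2).ne', mul_comm]
    exact hεT
  · rw [← hrT, eq_div_iff hrT_pos.ne', mul_comm]
    exact hlT

/-- In chart `K₁`, a trajectory of the desingularized canard
system starting in the blown-up critical manifold to the right of the zero set
of `F` (i.e. with `F ≥ δ > 0` along the solution, `x₁ 0 ∈ (0,1]`,
`r₁ 0 ∈ (0,ρ)`, `ε₁ 0 > 0`) leaves the chart domain through `{r₁ = ρ}` at a
first time `t̂ > 0`; on `[0, t̂]` the function `r₁` is strictly increasing and
`x₁` is strictly decreasing with `x₁ t = r₁ 0 · x₁ 0 / r₁ t > 0`, and the exit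
values are determined by the conserved quantities:
`x₁ t̂ = r₁ 0 · x₁ 0 / ρ`, `ε₁ t̂ = (r₁ 0)² ε₁ 0 / ρ²`, `λ₁ t̂ = r₁ 0 · λ₁ 0 / ρ`. -/
theorem chartK1_right_region_exits_chart
    (δ ρ : ℝ) (hδ : 0 < δ) (hρ : 0 < ρ) (x₁ r₁ ε₁ l₁ F : ℝ → ℝ)
    (hdiff : ∀ t : ℝ, 0 ≤ t → DifferentiableAt ℝ x₁ t ∧ DifferentiableAt ℝ r₁ t ∧
      DifferentiableAt ℝ ε₁ t ∧ DifferentiableAt ℝ l₁ t)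
    (hFcont : Continuous F) (hFpos : ∀ t : ℝ, 0 ≤ t → δ ≤ F t)
    (hx : ∀ t : ℝ, 0 ≤ t → x₁ t ∈ Set.Ioc (0 : ℝ) 1 → r₁ t ∈ Set.Ioc (0 : ℝ) ρ →
      HasDerivAt x₁ (-(1 / 2) * ε₁ t * x₁ t * F t) t)
    (hr : ∀ t : ℝ, 0 ≤ t → x₁ t ∈ Set.Ioc (0 : ℝ) 1 → r₁ t ∈ Set.Ioc (0 : ℝ) ρ →
      HasDerivAt r₁ ((1 / 2) * r₁ t * ε₁ t * F t) t)
    (he : ∀ t : ℝ, 0 ≤ t → x₁ t ∈ Set.Ioc (0 : ℝ) 1 → r₁ t ∈ Set.Ioc (0 : ℝ) ρ →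
      HasDerivAt ε₁ (-(ε₁ t) ^ 2 * F t) t)
    (hl : ∀ t : ℝ, 0 ≤ t → x₁ t ∈ Set.Ioc (0 : ℝ) 1 → r₁ t ∈ Set.Ioc (0 : ℝ) ρ →
      HasDerivAt l₁ (-(1 / 2) * l₁ t * ε₁ t * F t) t)
    (hx0 : x₁ 0 ∈ Set.Ioc (0 : ℝ) 1) (hr0 : r₁ 0 ∈ Set.Ioo (0 : ℝ) ρ)
    (he0 : 0 < ε₁ 0) :
    ∃ t' : ℝ, 0 < t' ∧ r₁ t' = ρ ∧ (∀ s ∈ Set.Ico (0 : ℝ) t', r₁ s ≠ ρ) ∧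
      StrictMonoOn r₁ (Set.Icc 0 t') ∧
      StrictAntiOn x₁ (Set.Icc 0 t') ∧
      (∀ s ∈ Set.Icc (0 : ℝ) t', x₁ s = r₁ 0 * x₁ 0 / r₁ s ∧ 0 < x₁ s) ∧
      x₁ t' = r₁ 0 * x₁ 0 / ρ ∧
      ε₁ t' = (r₁ 0) ^ 2 * ε₁ 0 / ρ ^ 2 ∧
      l₁ t' = r₁ 0 * l₁ 0 / ρ :=
  chartK1_right_region_exits_chart_general δ ρ hδ x₁ r₁ ε₁ l₁ F hdiff hFpos hx hr he hl hx0 hr0 he0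
end
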